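/- arXiv:2604.07043 — 10 statements merged into one kernel-verified Lean document; each statement's English description precedes it below -/
import Mathlib

section
/- Let S be an Int-presheaf of real vector spaces. If S is controllable, then S satisfies the continuation property. -/
noncomputable section

/-- An `Int`-presheaf of real vector spaces: to every compact interval `[a,b] ⊆ ℝ`
(`a ≤ b`, degenerate intervals allowed) it assigns a real vector space `sec a b`,
with linear restriction maps that are the identity on the interval itself and compose. -/
structure IntPresheaf where
  sec : ℝ → ℝ → Type
  [secAddCommGroup : ∀ a b : ℝ, AddCommGroup (sec a b)]
  [secModule : ∀ a b : ℝ, Module ℝ (sec a b)]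
  res : ∀ {a b c d : ℝ}, a ≤ b → b ≤ c → c ≤ d → sec a d → sec b c
  res_self : ∀ {a b : ℝ} (h : a ≤ b) (w : sec a b), res le_rfl h le_rfl w = w
  res_comp : ∀ {a b c d e f : ℝ} (hab : a ≤ b) (hbc : b ≤ c) (hcd : c ≤ d)
      (hde : d ≤ e) (hef : e ≤ f) (w : sec a f),
      res hbc hcd hde (res hab (hbc.trans (hcd.trans hde)) hef w)
        = res (hab.trans hbc) hcd (hde.trans hef) w
  res_add : ∀ {a b c d : ℝ} (hab : a ≤ b) (hbc : b ≤ c) (hcd : c ≤ d) (w w' : sec a d),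
      res hab hbc hcd (w + w') = res hab hbc hcd w + res hab hbc hcd w'
  res_smul : ∀ {a b c d : ℝ} (hab : a ≤ b) (hbc : b ≤ c) (hcd : c ≤ d) (r : ℝ) (w : sec a d),
      res hab hbc hcd (r • w) = r • res hab hbc hcd w

attribute [instance] IntPresheaf.secAddCommGroup IntPresheaf.secModule

/-- Sections `f ∈ S[a,b]`, `g ∈ S[b,c]`, `h ∈ S[c,d]` are compatible if
`f|[b,b] = g|[b,b]` and `g|[c,c] = h|[c,c]`. -/
def IntPresheaf.Compatible (S : IntPresheaf) {a b c d : ℝ}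
    (hab : a ≤ b) (hbc : b ≤ c) (hcd : c ≤ d)
    (f : S.sec a b) (g : S.sec b c) (h : S.sec c d) : Prop :=
  S.res hab le_rfl le_rfl f = S.res le_rfl le_rfl hbc g ∧
  S.res hbc le_rfl le_rfl g = S.res le_rfl le_rfl hcd h

/-- `S` is controllable. -/
def IntPresheaf.Controllable (S : IntPresheaf) : Prop :=
  ∀ (a b c d : ℝ) (hab : a < b) (hbc : b < c) (hcd : c < d)
    (f : S.sec a b) (h : S.sec c d), ∃ g : S.sec b c,
      S.Compatible hab.le hbc.le hcd.le f g h

/-- `S` is controllable to `0`. -/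
def IntPresheaf.ControllableToZero (S : IntPresheaf) : Prop :=
  ∀ (a b c d : ℝ) (hab : a < b) (hbc : b < c) (hcd : c < d)
    (f : S.sec a b), ∃ g : S.sec b c,
      S.Compatible hab.le hbc.le hcd.le f g (0 : S.sec c d)

/-- `S` satisfies the continuation property. -/
def IntPresheaf.Continuation (S : IntPresheaf) : Prop :=
  ∀ (a b : ℝ) (hab : a < b) (g : S.sec a b),
    ∃ ε : ℝ, ∃ _hε : 0 < ε, ∃ f : S.sec (a - ε) a, ∃ h : S.sec b (b + ε),
      S.Compatible (by linarith) hab.le (by linarith) f g h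

/-- An `Int`-sheaf of real vector spaces: an `Int`-presheaf with unique gluing of
compatible pairs of sections. -/
structure IntSheaf where
  toPresheaf : IntPresheaf
  glue : ∀ {a b c d : ℝ} (hab : a ≤ b) (hbc : b ≤ c) (hcd : c ≤ d)
      (f : toPresheaf.sec a c) (g : toPresheaf.sec b d),
      toPresheaf.res hab hbc le_rfl f = toPresheaf.res le_rfl hbc hcd g →
      ∃! h : toPresheaf.sec a d,
        toPresheaf.res le_rfl (hab.trans hbc) hcd h = f ∧
        toPresheaf.res hab (hbc.trans hcd) le_rfl h = g

/-- If an `Int`-presheaf of real vector spaces is controllable,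
then it satisfies the continuation property. -/
theorem controllable_implies_continuation (S : IntPresheaf)
    (hS : S.Controllable) : S.Continuation := by
  intro a b hab g
  obtain ⟨g1, _, h1⟩ := hS (a - 2) (a - 1) a b (by linarith) (by linarith) hab 0 g
  obtain ⟨g2, h2, _⟩ := hS a b (b + 1) (b + 2) hab (by linarith) (by linarith) g 0
  exact ⟨1, one_pos, g1, g2, h1, h2⟩
end
end

section
/- Let S be an Int-sheaf of real vector spaces satisfying the continuation property. Then S is controllable if and only if S is controllable to 0. -/
noncomputable section

namespace IntPresheaf

theorem res_zero' (S : IntPresheaf) {a b c d : ℝ} (hab : a ≤ b) (hbc : b ≤ c) (hcd : c ≤ d) :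
    S.res hab hbc hcd (0 : S.sec a d) = 0 := by
  have h := S.res_add hab hbc hcd 0 0
  rw [add_zero] at h
  exact left_eq_add.mp h

theorem res_sub' (S : IntPresheaf) {a b c d : ℝ} (hab : a ≤ b) (hbc : b ≤ c) (hcd : c ≤ d)
    (w w' : S.sec a d) :
    S.res hab hbc hcd (w - w') = S.res hab hbc hcd w - S.res hab hbc hcd w' := by
  have h2 : w' + (w - w') = w := by abel
  have h := S.res_add hab hbc hcd w' (w - w')
  rw [h2] at h
  exact eq_sub_of_add_eq' h.symm

/-- Evaluating a restriction at a point agrees with evaluating the original section. -/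
theorem ev_res (S : IntPresheaf) {a b x c d : ℝ} (hab : a ≤ b) (hbx : b ≤ x) (hxc : x ≤ c)
    (hcd : c ≤ d) (w : S.sec a d) :
    S.res hbx le_rfl hxc (S.res hab (hbx.trans hxc) hcd w)
      = S.res (hab.trans hbx) le_rfl (hxc.trans hcd) w :=
  S.res_comp hab hbx le_rfl hxc hcd w

end IntPresheaf

/-- An `Int`-sheaf of real vector spaces satisfying the continuation
property is controllable if and only if it is controllable to `0`. -/
theorem controllable_iff_controllableToZero_of_continuation (S : IntSheaf)
    (hS : S.toPresheaf.Continuation) :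
    S.toPresheaf.Controllable ↔ S.toPresheaf.ControllableToZero := by
  obtain ⟨P, glue⟩ := S
  constructor
  · intro hC a b c d hab hbc hcd f
    exact hC a b c d hab hbc hcd f 0
  · intro h0 a b c d hab hbc hcd f h
    -- choose midpoints b < m₁ < m < c
    obtain ⟨m, m₁, hbm₁, hm₁m, hmc⟩ : ∃ m m₁ : ℝ, b < m₁ ∧ m₁ < m ∧ m < c :=
      ⟨(b + c) / 2, (3 * b + c) / 4, by linarith, by linarith, by linarith⟩
    have hbm : b < m := hbm₁.trans hm₁m
    -- left piece: steer f to 0 on [b, m]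
    obtain ⟨g₁, hg₁l, hg₁r⟩ := h0 a b m₁ m hab hbm₁ hm₁m f
    obtain ⟨gL, ⟨hgL1, hgL2⟩, -⟩ := glue hbm₁.le le_rfl hm₁m.le g₁ (0 : P.sec m₁ m) hg₁r
    have hgLb : P.res le_rfl le_rfl hbm.le gL = P.res le_rfl le_rfl hbm₁.le g₁ := by
      rw [← hgL1]
      exact (P.ev_res le_rfl le_rfl hbm₁.le hm₁m.le gL).symm
    have hgLm : P.res hbm.le le_rfl le_rfl gL = 0 := by
      calc P.res hbm.le le_rfl le_rfl gL
          = P.res hm₁m.le le_rfl le_rfl (P.res hbm₁.le hm₁m.le le_rfl gL) :=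
            (P.ev_res hbm₁.le hm₁m.le le_rfl le_rfl gL).symm
        _ = P.res hm₁m.le le_rfl le_rfl (0 : P.sec m₁ m) :=
            congrArg (P.res hm₁m.le le_rfl le_rfl) hgL2
        _ = 0 := P.res_zero' _ _ _
    -- right piece: extend h leftward via continuation
    obtain ⟨ε, hε, v, hext, hv1, -⟩ := hS c d hcd h
    obtain ⟨c₀, hmc₀, hc₀c, hce⟩ : ∃ c₀ : ℝ, m < c₀ ∧ c₀ < c ∧ c - ε ≤ c₀ :=
      ⟨max ((m + c) / 2) (c - ε / 2),
        lt_of_lt_of_le (by linarith) (le_max_left _ _),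
        max_lt (by linarith) (by linarith),
        le_trans (by linarith) (le_max_right _ _)⟩
    set V : P.sec c₀ c := P.res hce hc₀c.le le_rfl v with hV
    have hVc : P.res hc₀c.le le_rfl le_rfl V = P.res le_rfl le_rfl hcd.le h :=
      (P.ev_res hce hc₀c.le le_rfl le_rfl v).trans hv1
    -- choose c₀ < p < q < c
    obtain ⟨p, q, hc₀p, hpq, hqc⟩ : ∃ p q : ℝ, c₀ < p ∧ p < q ∧ q < c :=
      ⟨c₀ + (c - c₀) / 3, c₀ + 2 * (c - c₀) / 3, by linarith [hc₀c], by linarith [hc₀c],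
        by linarith [hc₀c]⟩
    have hpc : p < c := hpq.trans hqc
    set Vp : P.sec c₀ p := P.res le_rfl hc₀p.le hpc.le V with hVp
    -- steer Vp to 0
    obtain ⟨g₂, hg₂l, hg₂r⟩ := h0 c₀ p q c hc₀p hpq hqc Vp
    obtain ⟨A₁, ⟨hA₁1, hA₁2⟩, -⟩ := glue hc₀p.le le_rfl hpq.le Vp g₂ hg₂l
    have hA₁q : P.res (hc₀p.le.trans hpq.le) le_rfl le_rfl A₁ = 0 := by
      calc P.res (hc₀p.le.trans hpq.le) le_rfl le_rfl A₁
          = P.res hpq.le le_rfl le_rfl (P.res hc₀p.le hpq.le le_rfl A₁) :=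
            (P.ev_res hc₀p.le hpq.le le_rfl le_rfl A₁).symm
        _ = P.res hpq.le le_rfl le_rfl g₂ := congrArg (P.res hpq.le le_rfl le_rfl) hA₁2
        _ = P.res le_rfl le_rfl hqc.le (0 : P.sec q c) := hg₂r
        _ = 0 := P.res_zero' _ _ _
    -- extend by zero past q
    obtain ⟨A, ⟨hA1, hA2⟩, -⟩ := glue (hc₀p.le.trans hpq.le) le_rfl hqc.le A₁ (0 : P.sec q c)
      (by rw [hA₁q, P.res_zero'])
    -- A agrees with V at c₀ and vanishes at c
    have hAc₀ : P.res le_rfl le_rfl hc₀c.le A = P.res le_rfl le_rfl hc₀c.le V := by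
      calc P.res le_rfl le_rfl hc₀c.le A
          = P.res le_rfl le_rfl (hc₀p.le.trans hpq.le)
              (P.res le_rfl (hc₀p.le.trans hpq.le) hqc.le A) :=
            (P.ev_res le_rfl le_rfl (hc₀p.le.trans hpq.le) hqc.le A).symm
        _ = P.res le_rfl le_rfl (hc₀p.le.trans hpq.le) A₁ :=
            congrArg (P.res le_rfl le_rfl (hc₀p.le.trans hpq.le)) hA1
        _ = P.res le_rfl le_rfl hc₀p.le (P.res le_rfl hc₀p.le hpq.le A₁) :=
            (P.ev_res le_rfl le_rfl hc₀p.le hpq.le A₁).symm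
        _ = P.res le_rfl le_rfl hc₀p.le Vp := congrArg (P.res le_rfl le_rfl hc₀p.le) hA₁1
        _ = P.res le_rfl le_rfl hc₀c.le V := P.ev_res le_rfl le_rfl hc₀p.le hpc.le V
    have hAc : P.res hc₀c.le le_rfl le_rfl A = 0 := by
      calc P.res hc₀c.le le_rfl le_rfl A
          = P.res hqc.le le_rfl le_rfl (P.res (hc₀p.le.trans hpq.le) hqc.le le_rfl A) :=
            (P.ev_res (hc₀p.le.trans hpq.le) hqc.le le_rfl le_rfl A).symm
        _ = P.res hqc.le le_rfl le_rfl (0 : P.sec q c) :=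
            congrArg (P.res hqc.le le_rfl le_rfl) hA2
        _ = 0 := P.res_zero' _ _ _
    -- D := V - A vanishes at c₀ and equals h(c) at c
    have hDc₀ : P.res le_rfl le_rfl hc₀c.le (V - A) = 0 := by
      rw [P.res_sub', hAc₀, sub_self]
    have hDc : P.res hc₀c.le le_rfl le_rfl (V - A) = P.res le_rfl le_rfl hcd.le h := by
      rw [P.res_sub', hAc, sub_zero, hVc]
    -- glue 0 on [m, c₀] with D
    obtain ⟨gR, ⟨hgR1, hgR2⟩, -⟩ := glue hmc₀.le le_rfl hc₀c.le (0 : P.sec m c₀) (V - A)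
      (by rw [P.res_zero', hDc₀])
    have hgRm : P.res le_rfl le_rfl hmc.le gR = 0 := by
      calc P.res le_rfl le_rfl hmc.le gR
          = P.res le_rfl le_rfl hmc₀.le (P.res le_rfl hmc₀.le hc₀c.le gR) :=
            (P.ev_res le_rfl le_rfl hmc₀.le hc₀c.le gR).symm
        _ = P.res le_rfl le_rfl hmc₀.le (0 : P.sec m c₀) :=
            congrArg (P.res le_rfl le_rfl hmc₀.le) hgR1
        _ = 0 := P.res_zero' _ _ _
    have hgRc : P.res hmc.le le_rfl le_rfl gR = P.res le_rfl le_rfl hcd.le h := by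
      calc P.res hmc.le le_rfl le_rfl gR
          = P.res hc₀c.le le_rfl le_rfl (P.res hmc₀.le hc₀c.le le_rfl gR) :=
            (P.ev_res hmc₀.le hc₀c.le le_rfl le_rfl gR).symm
        _ = P.res hc₀c.le le_rfl le_rfl (V - A) :=
            congrArg (P.res hc₀c.le le_rfl le_rfl) hgR2
        _ = P.res le_rfl le_rfl hcd.le h := hDc
    -- final glue
    obtain ⟨g, ⟨hgl, hgr⟩, -⟩ := glue hbm.le le_rfl hmc.le gL gR (by rw [hgLm, hgRm])
    refine ⟨g, ?_, ?_⟩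
    · calc P.res hab.le le_rfl le_rfl f
          = P.res le_rfl le_rfl hbm₁.le g₁ := hg₁l
        _ = P.res le_rfl le_rfl hbm.le gL := hgLb.symm
        _ = P.res le_rfl le_rfl hbm.le (P.res le_rfl hbm.le hmc.le g) :=
            (congrArg (P.res le_rfl le_rfl hbm.le) hgl).symm
        _ = P.res le_rfl le_rfl hbc.le g := P.ev_res le_rfl le_rfl hbm.le hmc.le g
    · calc P.res hbc.le le_rfl le_rfl g
          = P.res hmc.le le_rfl le_rfl (P.res hbm.le hmc.le le_rfl g) :=
            (P.ev_res hbm.le hmc.le le_rfl le_rfl g).symm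
        _ = P.res hmc.le le_rfl le_rfl gR := congrArg (P.res hmc.le le_rfl le_rfl) hgr
        _ = P.res le_rfl le_rfl hcd.le h := hgRc
end
end

section
/- Let S be an Int-sheaf of real vector spaces. Then S is controllable if and only if S is controllable to 0 and satisfies the continuation property. -/
noncomputable section

lemma IntPresheaf.res_zero (P : IntPresheaf) {a b c d : ℝ}
    (hab : a ≤ b) (hbc : b ≤ c) (hcd : c ≤ d) :
    P.res hab hbc hcd (0 : P.sec a d) = 0 := by
  have := P.res_smul hab hbc hcd 0 0
  simpa using this

lemma IntPresheaf.res_sub (P : IntPresheaf) {a b c d : ℝ}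
    (hab : a ≤ b) (hbc : b ≤ c) (hcd : c ≤ d) (w w' : P.sec a d) :
    P.res hab hbc hcd (w - w') = P.res hab hbc hcd w - P.res hab hbc hcd w' := by
  have h := P.res_add hab hbc hcd (w - w') w'
  rw [sub_add_cancel] at h
  rw [eq_sub_iff_add_eq]
  exact h.symm

/-- An `Int`-sheaf of real vector spaces is controllable if and only
if it is controllable to `0` and satisfies the continuation property. -/
theorem controllable_iff_controllableToZero_and_continuation (S : IntSheaf) :
    S.toPresheaf.Controllable ↔
      (S.toPresheaf.ControllableToZero ∧ S.toPresheaf.Continuation) := by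
  constructor
  · intro hC
    constructor
    · intro a b c d hab hbc hcd f
      exact hC a b c d hab hbc hcd f 0
    · intro a b hab g
      obtain ⟨fL, hfL⟩ := hC (a - 2) (a - 1) a b (by linarith) (by linarith) hab
        (0 : S.toPresheaf.sec (a - 2) (a - 1)) g
      obtain ⟨fR, hfR⟩ := hC a b (b + 1) (b + 2) hab (by linarith) (by linarith) g
        (0 : S.toPresheaf.sec (b + 1) (b + 2))
      exact ⟨1, one_pos, fL, fR, hfL.2, hfR.1⟩
  · rintro ⟨hZ, hCont⟩
    intro a b c d hab hbc hcd f h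
    obtain ⟨g1, hg1a, hg1b⟩ := hZ a b c d hab hbc hcd f
    obtain ⟨ε, hε, p, q, hpq1, hpq2⟩ := hCont c d hcd h
    set m : ℝ := max (c - ε) ((b + c) / 2) with hm
    have hbm : b < m := lt_of_lt_of_le (by linarith) (le_max_right _ _)
    have hmc : m < c := max_lt (by linarith) (by linarith)
    have hcem : c - ε ≤ m := le_max_left _ _
    set m1 : ℝ := m + (c - m) / 3 with hm1
    set m2 : ℝ := m + 2 * ((c - m) / 3) with hm2
    have hmm1 : m < m1 := by rw [hm1]; linarith
    have hm1m2 : m1 < m2 := by rw [hm1, hm2]; linarith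
    have hm2c : m2 < c := by rw [hm2]; linarith
    have hm1c : m1 < c := hm1m2.trans hm2c
    have hbm1 : b < m1 := hbm.trans hmm1
    -- a leftward extension of `h` living on `[m, c]`
    obtain ⟨w, hw⟩ : ∃ w : S.toPresheaf.sec m c,
        S.toPresheaf.res hmc.le le_rfl le_rfl w
          = S.toPresheaf.res le_rfl le_rfl hcd.le h :=
      ⟨S.toPresheaf.res hcem hmc.le le_rfl p, by
        rw [S.toPresheaf.res_comp hcem hmc.le le_rfl le_rfl le_rfl p]
        exact hpq1⟩
    -- steer `w|[m,m1]` to zero over `[m1,m2]`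
    obtain ⟨z, hz1, hz2⟩ := hZ m m1 m2 c hmm1 hm1m2 hm2c
      (S.toPresheaf.res le_rfl hmm1.le hm1c.le w)
    -- glue `z` with `0` on `[m2,c]` into `Z` on `[m1,c]`
    obtain ⟨Z, ⟨hZ1, hZ2⟩, -⟩ := S.glue hm1m2.le le_rfl hm2c.le z
      (0 : S.toPresheaf.sec m2 c) hz2
    -- value of `Z` at `m1` is value of `w` at `m1`
    have hZm1 : S.toPresheaf.res le_rfl le_rfl hm1c.le Z
        = S.toPresheaf.res hmm1.le le_rfl hm1c.le w := by
      have e1 : S.toPresheaf.res le_rfl le_rfl hm1m2.le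
            (S.toPresheaf.res le_rfl hm1m2.le hm2c.le Z)
          = S.toPresheaf.res le_rfl le_rfl hm1c.le Z :=
        S.toPresheaf.res_comp le_rfl le_rfl le_rfl hm1m2.le hm2c.le Z
      have e2 : S.toPresheaf.res hmm1.le le_rfl le_rfl
            (S.toPresheaf.res le_rfl hmm1.le hm1c.le w)
          = S.toPresheaf.res hmm1.le le_rfl hm1c.le w :=
        S.toPresheaf.res_comp le_rfl hmm1.le le_rfl le_rfl hm1c.le w
      rw [← e1, hZ1, ← hz1, e2]
    -- value of `Z` at `c` is `0`
    have hZc : S.toPresheaf.res hm1c.le le_rfl le_rfl Z = 0 := by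
      have e1 : S.toPresheaf.res hm2c.le le_rfl le_rfl
            (S.toPresheaf.res hm1m2.le hm2c.le le_rfl Z)
          = S.toPresheaf.res hm1c.le le_rfl le_rfl Z :=
        S.toPresheaf.res_comp hm1m2.le hm2c.le le_rfl le_rfl le_rfl Z
      rw [← e1, hZ2, S.toPresheaf.res_zero]
    -- v := w|[m1,c] - Z
    set v : S.toPresheaf.sec m1 c :=
      S.toPresheaf.res hmm1.le hm1c.le le_rfl w - Z with hv
    have hvm1 : S.toPresheaf.res le_rfl le_rfl hm1c.le v = 0 := by
      rw [hv, S.toPresheaf.res_sub]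
      have e1 : S.toPresheaf.res le_rfl le_rfl hm1c.le
            (S.toPresheaf.res hmm1.le hm1c.le le_rfl w)
          = S.toPresheaf.res hmm1.le le_rfl hm1c.le w :=
        S.toPresheaf.res_comp hmm1.le le_rfl le_rfl hm1c.le le_rfl w
      rw [e1, hZm1, sub_self]
    have hvc : S.toPresheaf.res hm1c.le le_rfl le_rfl v
        = S.toPresheaf.res le_rfl le_rfl hcd.le h := by
      rw [hv, S.toPresheaf.res_sub]
      have e1 : S.toPresheaf.res hm1c.le le_rfl le_rfl
            (S.toPresheaf.res hmm1.le hm1c.le le_rfl w)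
          = S.toPresheaf.res hmc.le le_rfl le_rfl w :=
        S.toPresheaf.res_comp hmm1.le hm1c.le le_rfl le_rfl le_rfl w
      rw [e1, hZc, hw, sub_zero]
    -- glue `0` on `[b,m1]` with `v` into `g2` on `[b,c]`
    obtain ⟨g2, ⟨hG1, hG2⟩, -⟩ := S.glue hbm1.le le_rfl hm1c.le
      (0 : S.toPresheaf.sec b m1) v
      (by rw [S.toPresheaf.res_zero, hvm1])
    refine ⟨g1 + g2, ?_, ?_⟩
    · rw [S.toPresheaf.res_add, ← hg1a]
      have e1 : S.toPresheaf.res le_rfl le_rfl hbm1.le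
            (S.toPresheaf.res le_rfl hbm1.le hm1c.le g2)
          = S.toPresheaf.res le_rfl le_rfl hbc.le g2 :=
        S.toPresheaf.res_comp le_rfl le_rfl le_rfl hbm1.le hm1c.le g2
      rw [← e1, hG1, S.toPresheaf.res_zero, add_zero]
    · rw [S.toPresheaf.res_add, hg1b, S.toPresheaf.res_zero]
      have e1 : S.toPresheaf.res hm1c.le le_rfl le_rfl
            (S.toPresheaf.res hbm1.le hm1c.le le_rfl g2)
          = S.toPresheaf.res hbc.le le_rfl le_rfl g2 :=
        S.toPresheaf.res_comp hbm1.le hm1c.le le_rfl le_rfl le_rfl g2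
      rw [← e1, hG2, hvc, zero_add]
end
end

section
/- Let S be an Int-sheaf of real vector spaces that is controllable. Then S is flabby on proper intervals: for all a' ≤ a < b ≤ b', the restriction map S[a',b'] → S[a,b] is surjective, i.e., every f ∈ S[a,b] is the restriction of some e ∈ S[a',b']. -/
noncomputable section

/-- A controllable `Int`-sheaf of real vector spaces is flabby on
proper intervals: for all `a' ≤ a < b ≤ b'`, every `f ∈ S[a,b]` is the restriction of
some `e ∈ S[a',b']`. -/
theorem controllable_flabby (S : IntSheaf) (hS : S.toPresheaf.Controllable)
    (a' a b b' : ℝ) (h1 : a' ≤ a) (h2 : a < b) (h3 : b ≤ b')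
    (f : S.toPresheaf.sec a b) :
    ∃ e : S.toPresheaf.sec a' b', S.toPresheaf.res h1 h2.le h3 e = f := by
  have ha1 : a' - 1 ≤ a := by linarith
  have hb1 : b ≤ b' + 1 := by linarith
  -- left piece
  obtain ⟨gL, hgL⟩ := hS (a' - 2) (a' - 1) a b (by linarith) (by linarith) h2
    (0 : S.toPresheaf.sec (a' - 2) (a' - 1)) f
  obtain ⟨F1, ⟨hF1L, hF1R⟩, -⟩ := S.glue ha1 (le_refl a) h2.le gL f hgL.2
  -- right piece
  obtain ⟨gR, hgR⟩ := hS a b (b' + 1) (b' + 2) h2 (by linarith) (by linarith) f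
    (0 : S.toPresheaf.sec (b' + 1) (b' + 2))
  -- glue F1 and gR at b
  have key : S.toPresheaf.res (ha1.trans h2.le) (le_refl b) (le_refl b) F1
      = S.toPresheaf.res (le_refl b) (le_refl b) hb1 gR := by
    have hc := S.toPresheaf.res_comp ha1 h2.le (le_refl b) (le_refl b) (le_refl b) F1
    rw [hF1R] at hc
    rw [← hc, hgR.1]
  obtain ⟨F, ⟨hFL, hFR⟩, -⟩ := S.glue (ha1.trans h2.le) (le_refl b) hb1 F1 gR key
  refine ⟨S.toPresheaf.res (by linarith : a' - 1 ≤ a') (h1.trans (h2.le.trans h3))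
    (by linarith : b' ≤ b' + 1) F, ?_⟩
  have hc1 := S.toPresheaf.res_comp (by linarith : a' - 1 ≤ a') h1 h2.le h3
    (by linarith : b' ≤ b' + 1) F
  rw [hc1]
  have hc2 := S.toPresheaf.res_comp (le_refl (a' - 1)) ha1 h2.le (le_refl b) hb1 F
  rw [hFL] at hc2
  rw [← hc2, hF1R]
end
end

section
/- There exists an Int-sheaf of real vector spaces that is controllable to 0 but not controllable. -/
noncomputable section

/-!
Take the sheaf in which a section over `[a,b]` is a vector sitting at the left endpoint `a`,
restricting to `0` on every subinterval that does not start at `a`; a glued section is just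
its left piece. Steering to `0` is trivial, since `f`, the zero section on `[b,c]` and `0`
all vanish at the junctions. A nonzero `h` on `[c,d]` is never reachable, because every
section over `[b,c]` with `b < c` vanishes at `c`.
-/

namespace IntPresheaf

variable (V : Type) [AddCommGroup V] [Module ℝ V]

def leftEndpoint : IntPresheaf where
  sec _ _ := V
  res {a b _ _} _ _ _ v := if a = b then v else 0
  res_self _ _ := if_pos rfl
  res_comp := by
    intro a b c d e f hab hbc hcd hde hef w
    by_cases hbc' : b = c
    · subst hbc'; simp
    · have hac : a ≠ c := fun hac => hbc' (le_antisymm hbc (hac ▸ hab))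
      simp [hbc', hac]
  res_add := by intros; split_ifs <;> simp
  res_smul := by intros; split_ifs <;> simp

variable {V}

theorem leftEndpoint_res_left {a c d : ℝ} (hac : a ≤ c) (hcd : c ≤ d)
    (v : (leftEndpoint V).sec a d) :
    (leftEndpoint V).res le_rfl hac hcd v = v :=
  if_pos rfl

theorem leftEndpoint_res_of_lt {a b c d : ℝ} (hab : a < b) (hbc : b ≤ c) (hcd : c ≤ d)
    (v : (leftEndpoint V).sec a d) : (leftEndpoint V).res hab.le hbc hcd v = 0 :=
  if_neg hab.ne

theorem leftEndpoint_controllableToZero : (leftEndpoint V).ControllableToZero := by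
  intro a b c d hab hbc hcd f
  refine ⟨0, ?_, ?_⟩
  · rw [leftEndpoint_res_of_lt hab, leftEndpoint_res_left]
    rfl
  · rw [leftEndpoint_res_of_lt hbc, leftEndpoint_res_left]
    rfl

theorem leftEndpoint_not_controllable [Nontrivial V] : ¬ (leftEndpoint V).Controllable := by
  intro hC
  obtain ⟨h, hh⟩ := exists_ne (0 : V)
  obtain ⟨g, -, hgh⟩ := hC 0 1 2 3 one_pos one_lt_two (by norm_num) 0 h
  rw [leftEndpoint_res_of_lt one_lt_two] at hgh
  exact hh (hgh.trans (leftEndpoint_res_left _ _ h)).symm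

end IntPresheaf

def IntSheaf.leftEndpoint (V : Type) [AddCommGroup V] [Module ℝ V] : IntSheaf where
  toPresheaf := IntPresheaf.leftEndpoint V
  glue hab hbc hcd f g hfg :=
    ⟨(f : V), ⟨IntPresheaf.leftEndpoint_res_left (hab.trans hbc) hcd _,
      hfg.trans (IntPresheaf.leftEndpoint_res_left hbc hcd g)⟩,
      fun k hk => (IntPresheaf.leftEndpoint_res_left (hab.trans hbc) hcd k).symm.trans hk.1⟩

/-- There exists an `Int`-sheaf of real vector spaces that is
controllable to `0` but not controllable. -/
theorem exists_controllableToZero_not_controllable :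
    ∃ S : IntSheaf, S.toPresheaf.ControllableToZero ∧ ¬ S.toPresheaf.Controllable :=
  ⟨IntSheaf.leftEndpoint ℝ, IntPresheaf.leftEndpoint_controllableToZero,
    IntPresheaf.leftEndpoint_not_controllable⟩
end
end

section
/- Let L ∈ ℕ ∪ {∞}, let a < b < c be real numbers, and let f, g : ℝ → ℝ be such that f is C^L on [a,b] and g is C^L on [b,c] (in the sense of ContDiffOn, with one-sided derivatives at the endpoints). Suppose that for every natural number k with k ≤ L, the k-th iterated derivative of f within [a,b] at b equals the k-th iterated derivative of g within [b,c] at b. Then the concatenated function h, defined by h(t) = f(t) for t ∈ [a,b] and h(t) = g(t) for t ∈ (b,c], is C^L on [a,c]. -/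
/-!
Glue one derivative at a time. If `H` is differentiable on `[a,b]` and on `[b,c]` and the two
one-sided derivatives agree at `b`, then `H` is differentiable within `[a,c]`, and its derivative
restricts to the derivatives within the two pieces; so the derivative is again a function whose
restrictions to `[a,b]` and `[b,c]` have matching jets at `b`, one order lower. Induction on the
order proves the finite-order case, and `C^∞` means `C^m` for every finite `m`.
-/

open Set

theorem HasDerivWithinAt.union_of_isClosed {𝕜 F : Type*} [NontriviallyNormedField 𝕜]
    [NormedAddCommGroup F] [NormedSpace 𝕜 F] {f : 𝕜 → F} {f' : F} {s t : Set 𝕜} {x : 𝕜}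
    (hs : IsClosed s) (ht : IsClosed t)
    (hfs : x ∈ s → HasDerivWithinAt f f' s x) (hft : x ∈ t → HasDerivWithinAt f f' t x) :
    HasDerivWithinAt f f' (s ∪ t) x := by
  refine HasDerivWithinAt.union ?_ ?_
  · by_cases hx : x ∈ s
    · exact hfs hx
    · exact HasFDerivWithinAt.of_notMem_closure (by rwa [hs.closure_eq])
  · by_cases hx : x ∈ t
    · exact hft hx
    · exact HasFDerivWithinAt.of_notMem_closure (by rwa [ht.closure_eq])

section Gluing

variable {F : Type*} [NormedAddCommGroup F] [NormedSpace ℝ F] {H : ℝ → F} {a b c : ℝ}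

theorem hasDerivWithinAt_Icc_of_mem_left (hab : a ≤ b) (hbc : b ≤ c)
    (hl : DifferentiableOn ℝ H (Icc a b)) (hr : DifferentiableOn ℝ H (Icc b c))
    (hjet : derivWithin H (Icc a b) b = derivWithin H (Icc b c) b) {t : ℝ} (ht : t ∈ Icc a b) :
    HasDerivWithinAt H (derivWithin H (Icc a b) t) (Icc a c) t := by
  rw [← Icc_union_Icc_eq_Icc hab hbc]
  refine .union_of_isClosed isClosed_Icc isClosed_Icc (fun _ ↦ (hl t ht).hasDerivWithinAt) ?_
  rintro ht'
  obtain rfl : t = b := le_antisymm ht.2 ht'.1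
  exact hjet ▸ (hr t ht').hasDerivWithinAt

theorem hasDerivWithinAt_Icc_of_mem_right (hab : a ≤ b) (hbc : b ≤ c)
    (hl : DifferentiableOn ℝ H (Icc a b)) (hr : DifferentiableOn ℝ H (Icc b c))
    (hjet : derivWithin H (Icc a b) b = derivWithin H (Icc b c) b) {t : ℝ} (ht : t ∈ Icc b c) :
    HasDerivWithinAt H (derivWithin H (Icc b c) t) (Icc a c) t := by
  rw [← Icc_union_Icc_eq_Icc hab hbc]
  refine .union_of_isClosed isClosed_Icc isClosed_Icc ?_ (fun _ ↦ (hr t ht).hasDerivWithinAt)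
  rintro ht'
  obtain rfl : t = b := le_antisymm ht'.2 ht.1
  exact hjet ▸ (hl t ht').hasDerivWithinAt

theorem contDiffOn_Icc_of_jet_eq_nat (hab : a < b) (hbc : b < c) (n : ℕ)
    (hl : ContDiffOn ℝ n H (Icc a b)) (hr : ContDiffOn ℝ n H (Icc b c))
    (hjet : ∀ k ≤ n, iteratedDerivWithin k H (Icc a b) b = iteratedDerivWithin k H (Icc b c) b) :
    ContDiffOn ℝ n H (Icc a c) := by
  induction n generalizing H with
  | zero =>
    simp only [CharP.cast_eq_zero, contDiffOn_zero] at hl hr ⊢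
    rw [← Icc_union_Icc_eq_Icc hab.le hbc.le]
    exact hl.union_of_isClosed hr isClosed_Icc isClosed_Icc
  | succ n ih =>
    rw [Nat.cast_succ, contDiffOn_succ_iff_derivWithin (uniqueDiffOn_Icc hab)] at hl
    rw [Nat.cast_succ, contDiffOn_succ_iff_derivWithin (uniqueDiffOn_Icc hbc)] at hr
    have hderiv := hjet 1 (by omega)
    simp only [iteratedDerivWithin_one] at hderiv
    have hac : UniqueDiffOn ℝ (Icc a c) := uniqueDiffOn_Icc (hab.trans hbc)
    have hleft : ∀ t ∈ Icc a b, HasDerivWithinAt H (derivWithin H (Icc a b) t) (Icc a c) t :=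
      fun _ ↦ hasDerivWithinAt_Icc_of_mem_left hab.le hbc.le hl.1 hr.1 hderiv
    have hright : ∀ t ∈ Icc b c, HasDerivWithinAt H (derivWithin H (Icc b c) t) (Icc a c) t :=
      fun _ ↦ hasDerivWithinAt_Icc_of_mem_right hab.le hbc.le hl.1 hr.1 hderiv
    have hD : DifferentiableOn ℝ H (Icc a c) := fun t ht ↦ by
      rcases le_total t b with htb | hbt
      · exact (hleft t ⟨ht.1, htb⟩).differentiableWithinAt
      · exact (hright t ⟨hbt, ht.2⟩).differentiableWithinAt
    have hEqOnl : EqOn (derivWithin H (Icc a c)) (derivWithin H (Icc a b)) (Icc a b) :=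
      fun t ht ↦ (hleft t ht).derivWithin (hac t ⟨ht.1, ht.2.trans hbc.le⟩)
    have hEqOnr : EqOn (derivWithin H (Icc a c)) (derivWithin H (Icc b c)) (Icc b c) :=
      fun t ht ↦ (hright t ht).derivWithin (hac t ⟨hab.le.trans ht.1, ht.2⟩)
    rw [Nat.cast_succ, contDiffOn_succ_iff_derivWithin hac]
    refine ⟨hD, by simp, ih (hl.2.2.congr hEqOnl) (hr.2.2.congr hEqOnr) fun k hk ↦ ?_⟩
    rw [iteratedDerivWithin_congr hEqOnl ⟨hab.le, le_rfl⟩,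
      iteratedDerivWithin_congr hEqOnr ⟨le_rfl, hbc.le⟩,
      ← iteratedDerivWithin_succ', ← iteratedDerivWithin_succ']
    exact hjet (k + 1) (by omega)

theorem contDiffOn_Icc_of_jet_eq (hab : a < b) (hbc : b < c) {n : ℕ∞}
    (hl : ContDiffOn ℝ n H (Icc a b)) (hr : ContDiffOn ℝ n H (Icc b c))
    (hjet : ∀ k : ℕ, (k : ℕ∞) ≤ n →
      iteratedDerivWithin k H (Icc a b) b = iteratedDerivWithin k H (Icc b c) b) :
    ContDiffOn ℝ n H (Icc a c) :=
  contDiffOn_iff_forall_nat_le.2 fun m hm ↦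
    contDiffOn_Icc_of_jet_eq_nat hab hbc m (hl.of_le (mod_cast hm)) (hr.of_le (mod_cast hm))
      fun k hk ↦ hjet k ((Nat.cast_le.2 hk).trans hm)

end Gluing

/-- Let `L ∈ ℕ ∪ {∞}`, `a < b < c`, and let `f` be `C^L` on `[a,b]`
and `g` be `C^L` on `[b,c]` (one-sided derivatives at the endpoints). If for every
`k ≤ L` the `k`-th iterated derivative of `f` within `[a,b]` at `b` equals the `k`-th
iterated derivative of `g` within `[b,c]` at `b`, then the concatenation
`h t = f t` for `t ≤ b`, `h t = g t` for `t > b`, is `C^L` on `[a,c]`. -/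
theorem contDiffOn_concat (L : ℕ∞) (a b c : ℝ) (hab : a < b) (hbc : b < c)
    (f g : ℝ → ℝ)
    (hf : ContDiffOn ℝ L f (Set.Icc a b)) (hg : ContDiffOn ℝ L g (Set.Icc b c))
    (hjet : ∀ k : ℕ, (k : ℕ∞) ≤ L →
      iteratedDerivWithin k f (Set.Icc a b) b = iteratedDerivWithin k g (Set.Icc b c) b) :
    ContDiffOn ℝ L (fun t => if t ≤ b then f t else g t) (Set.Icc a c) := by
  set h : ℝ → ℝ := fun t => if t ≤ b then f t else g t
  have hfb : f b = g b := by simpa using hjet 0 (by simp)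
  have hhf : EqOn h f (Icc a b) := fun t ht ↦ if_pos ht.2
  have hhg : EqOn h g (Icc b c) := fun t ht ↦ by
    rcases ht.1.eq_or_lt with rfl | hbt
    · exact (if_pos le_rfl).trans hfb
    · exact if_neg hbt.not_ge
  refine contDiffOn_Icc_of_jet_eq hab hbc (hf.congr hhf) (hg.congr hhg) fun k hk ↦ ?_
  rw [iteratedDerivWithin_congr hhf ⟨hab.le, le_rfl⟩,
    iteratedDerivWithin_congr hhg ⟨le_rfl, hbc.le⟩]
  exact hjet k hk
end

section
/- Fix real numbers a < b and parameters −1 ≤ L ≤ M ≤ N and −1 ≤ L' ≤ M' ≤ N' in {−1, 0, 1, 2, …} ∪ {∞}. Then C^{L',M',N'}[a,b] ⊆ C^{L,M,N}[a,b] if and only if L ≤ L', M ≤ M', and N ≤ N'. -/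
/-!
Inclusion is clearly antitone in each index, so the content is necessity, shown by explicit
witnesses. The common obstruction: if a class has a representative that is `C^k` on a set `s`
around `c`, then the `k`-th derivative of any function agreeing with it off finitely many points
has one and the same limit at `c` from every side of `c` within `s`.
* `(x - c)₊ ^ k` (for `k = 0` the jump `1_{x > c}`) is `C^(k-1)` and polynomial on either side of
  `c`, so it lies in `C^{k-1, M', N'}` for all `M', N'`; its `k`-th derivative jumps from `0` to
  `k!` at `c`, so it is not in `C^k`.
* `(x - c)₊ ^ (m - 1/2)` is `C^(m-1)` and smooth off `c`, but its `m`-th derivative blows up at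
  `c⁺`, so no restriction to `[c, y]` is `C^m`.
* The `n`-fold primitive of a bounded staircase with jumps at the points `a + 1/j` is `C^(n-1)`,
  but its `n`-th derivative jumps at infinitely many points, so it is not `C^n` off any finite
  set.
-/

noncomputable section

/-- Two functions agree on `[a,b]` outside some finite set. -/
def finEq (a b : ℝ) (f g : ℝ → ℝ) : Prop :=
  ∃ E : Finset ℝ, ∀ t ∈ Set.Icc a b \ (E : Set ℝ), f t = g t

/-- The setoid on real functions: agreement on `[a,b]` off a finite set. -/
def finSetoid (a b : ℝ) : Setoid (ℝ → ℝ) where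
  r := finEq a b
  iseqv := by
    constructor
    · intro f; exact ⟨∅, fun t _ => rfl⟩
    · rintro f g ⟨E, hE⟩; exact ⟨E, fun t ht => (hE t ht).symm⟩
    · rintro f g h ⟨E1, h1⟩ ⟨E2, h2⟩
      refine ⟨E1 ∪ E2, fun t ht => ?_⟩
      have h1' : f t = g t := h1 t ⟨ht.1, fun hm => ht.2 (by simp [hm])⟩
      have h2' : g t = h t := h2 t ⟨ht.1, fun hm => ht.2 (by simp [hm])⟩
      exact h1'.trans h2'

/-- `C^{-1}[a,b]`: classes of functions with finitely many singularities on `[a,b]`. -/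
def Cm1 (a b : ℝ) : Type := Quotient (finSetoid a b)

/-- The class of a function. -/
def Cm1.mk (a b : ℝ) (f : ℝ → ℝ) : Cm1 a b := Quotient.mk (finSetoid a b) f

/-- Restriction of classes to a subinterval `[x,y] ⊆ [a,b]`. -/
def Cm1.res {a b : ℝ} (x y : ℝ) (hax : a ≤ x) (hyb : y ≤ b) (w : Cm1 a b) : Cm1 x y :=
  Quotient.liftOn w (fun f => Cm1.mk x y f) (fun f g hfg => by
    obtain ⟨E, hE⟩ := hfg
    exact Quotient.sound ⟨E, fun t ht => hE t ⟨⟨hax.trans ht.1.1, ht.1.2.trans hyb⟩, ht.2⟩⟩)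

/-- `f` is `C^L` on `s`, for `L ∈ {-1, 0, 1, …} ∪ {∞}` (coded in `WithTop ℤ`):
`f` is `C^k` on `s` for every natural `k ≤ L`; for `L = -1` no condition. -/
def contDiffReg (L : WithTop ℤ) (f : ℝ → ℝ) (s : Set ℝ) : Prop :=
  ∀ k : ℕ, ((k : ℤ) : WithTop ℤ) ≤ L → ContDiffOn ℝ k f s

/-- `C^N[a,b]` as a set of classes: those represented by a function that is `C^N`
on all of `[a,b]`. -/
def CNclass (N : WithTop ℤ) (a b : ℝ) : Set (Cm1 a b) :=
  {w | ∃ f : ℝ → ℝ, Cm1.mk a b f = w ∧ contDiffReg N f (Set.Icc a b)}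

/-- `C^N_pw[a,b]`: classes represented by a function that is `C^N` on `[a,b]` minus a
finite set. -/
def CNpw (N : WithTop ℤ) (a b : ℝ) : Set (Cm1 a b) :=
  {w | ∃ f : ℝ → ℝ, Cm1.mk a b f = w ∧
    ∃ E : Finset ℝ, contDiffReg N f (Set.Icc a b \ (E : Set ℝ))}

/-- `C^{L,M,N}[a,b]`: classes `w ∈ C^L[a,b] ∩ C^N_pw[a,b]` such that for some finite
set `E` and every open interval `(x,y) ⊆ (a,b) \ E`, the restriction `w|[x,y]` lies in
`C^M[x,y]`. -/
def CLMN (L M N : WithTop ℤ) (a b : ℝ) : Set (Cm1 a b) :=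
  {w | w ∈ CNclass L a b ∧ w ∈ CNpw N a b ∧
    ∃ E : Finset ℝ, ∀ (x y : ℝ) (hax : a ≤ x) (hyb : y ≤ b), x < y →
      Set.Ioo x y ⊆ Set.Ioo a b \ (E : Set ℝ) →
      Cm1.res x y hax hyb w ∈ CNclass M x y}

open Set Filter Topology MeasureTheory
open scoped ContDiff

theorem tendsto_iteratedDeriv_of_contDiffOn_of_eqOn {𝕜 F : Type*} [NontriviallyNormedField 𝕜]
    [NormedAddCommGroup F] [NormedSpace 𝕜 F] {f g : 𝕜 → F} {s U : Set 𝕜} {c : 𝕜}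
    {l : Filter 𝕜} {k : ℕ} (hg : ContDiffOn 𝕜 k g s) (hs : UniqueDiffOn 𝕜 s) (hc : c ∈ s)
    (hU : IsOpen U) (hUs : U ⊆ s) (hgf : EqOn g f U) (hl : l ≤ 𝓝[s] c) (hUl : U ∈ l) :
    Tendsto (iteratedDeriv k f) l (𝓝 (iteratedDerivWithin k g s c)) := by
  refine (((hg.continuousOn_iteratedDerivWithin le_rfl hs) c hc).tendsto.mono_left hl).congr' ?_
  filter_upwards [hUl] with x hx
  rw [iteratedDerivWithin_eq_iteratedDeriv hs (hg.contDiffAt (mem_of_superset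
    (hU.mem_nhds hx) hUs)) (hUs hx)]
  exact hgf.iteratedDeriv_of_isOpen hU k hx

theorem compl_finset_mem_nhdsNE {X : Type*} [TopologicalSpace X] [T1Space X] (E : Finset X)
    (x : X) : (E : Set X)ᶜ ∈ 𝓝[≠] x := by
  simpa [compl_eq_univ_sdiff] using
    nhdsNE_of_nhdsNE_sdiff_finite (x := x) univ_mem (E.finite_toSet.to_subtype)

theorem Ioo_sdiff_finset_mem_nhdsGT {a b : ℝ} (hab : a < b) (E : Finset ℝ) :
    Ioo a b \ E ∈ 𝓝[>] a :=
  sdiff_mem (Ioo_mem_nhdsGT hab) (nhdsGT_le_nhdsNE a (compl_finset_mem_nhdsNE E a))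

theorem contDiffReg_mono {R R' : WithTop ℤ} (h : R ≤ R') {f : ℝ → ℝ} {s : Set ℝ}
    (hf : contDiffReg R' f s) : contDiffReg R f s :=
  fun k hk => hf k (hk.trans h)

theorem CLMN_subset_CLMN {L M N L' M' N' : WithTop ℤ} (hL : L ≤ L') (hM : M ≤ M') (hN : N ≤ N')
    {a b : ℝ} : CLMN L' M' N' a b ⊆ CLMN L M N a b := by
  rintro w ⟨⟨f, hf, hfL⟩, ⟨g, hg, E, hgN⟩, E', hM'⟩
  refine ⟨⟨f, hf, contDiffReg_mono hL hfL⟩, ⟨g, hg, E, contDiffReg_mono hN hgN⟩, E', ?_⟩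
  intro x y hax hyb hxy hsub
  obtain ⟨h, hh, hhM⟩ := hM' x y hax hyb hxy hsub
  exact ⟨h, hh, contDiffReg_mono hM hhM⟩

theorem exists_natCast_sub_one_of_lt {X Y : WithTop ℤ} (hX : -1 ≤ X) (hXY : X < Y) :
    ∃ n : ℕ, X = ((n - 1 : ℤ) : WithTop ℤ) ∧ ((n : ℤ) : WithTop ℤ) ≤ Y := by
  lift X to ℤ using hXY.ne_top
  have hX' : -1 ≤ X := WithTop.coe_le_coe.mp hX
  refine ⟨(X + 1).toNat, by congr 1; omega, ?_⟩
  induction Y with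
  | top => exact le_top
  | coe Y => exact WithTop.coe_le_coe.mpr (by have := WithTop.coe_lt_coe.mp hXY; omega)

def rightPow (c p : ℝ) (x : ℝ) : ℝ := if c < x then (x - c) ^ p else 0

section RightPow

variable {c p x : ℝ}

theorem rightPow_of_le (hx : x ≤ c) : rightPow c p x = 0 := if_neg hx.not_gt

theorem rightPow_of_lt (hx : c < x) : rightPow c p x = (x - c) ^ p := if_pos hx

theorem rightPow_eventuallyEq_of_lt (hx : x < c) : rightPow c p =ᶠ[𝓝 x] fun _ => 0 := by
  filter_upwards [Iio_mem_nhds hx] with y hy using rightPow_of_le hy.le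

theorem rightPow_eventuallyEq_of_gt (hx : c < x) :
    rightPow c p =ᶠ[𝓝 x] fun y => (y - c) ^ p := by
  filter_upwards [Ioi_mem_nhds hx] with y hy using rightPow_of_lt hy

theorem rightPow_eq_max_rpow (hp : p ≠ 0) : rightPow c p = fun y => max (y - c) 0 ^ p := by
  ext y
  rcases le_or_gt y c with hy | hy
  · rw [rightPow_of_le hy, max_eq_right (by linarith), Real.zero_rpow hp]
  · rw [rightPow_of_lt hy, max_eq_left (by linarith)]

theorem contDiffAt_rightPow (hx : x ≠ c) {n : WithTop ℕ∞} :
    ContDiffAt ℝ n (rightPow c p) x := by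
  rcases hx.lt_or_gt with hx | hx
  · exact contDiffAt_const.congr_of_eventuallyEq (rightPow_eventuallyEq_of_lt hx)
  · exact ((Real.contDiffAt_rpow_const_of_ne (sub_pos.mpr hx).ne').comp x
      (contDiffAt_id.sub contDiffAt_const)).congr_of_eventuallyEq
      (rightPow_eventuallyEq_of_gt hx)

theorem continuous_rightPow (hp : 0 < p) : Continuous (rightPow c p) := by
  rw [rightPow_eq_max_rpow hp.ne']
  exact ((continuous_id.sub continuous_const).max continuous_const).rpow_const
    fun _ => Or.inr hp.le

/-- At `c` the difference quotient of `rightPow c p` is `rightPow c (p - 1)`, which tends to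
`0` when `p > 1`. -/
theorem hasDerivAt_rightPow (hp : 1 < p) (x : ℝ) :
    HasDerivAt (rightPow c p) (p * rightPow c (p - 1) x) x := by
  rcases lt_trichotomy x c with hx | hx | hx
  · rw [rightPow_of_le hx.le, mul_zero]
    exact (hasDerivAt_const x 0).congr_of_eventuallyEq (rightPow_eventuallyEq_of_lt hx)
  · subst x
    rw [rightPow_of_le le_rfl, mul_zero, hasDerivAt_iff_tendsto_slope]
    have h0 := (continuous_rightPow (c := c) (sub_pos.mpr hp)).continuousAt (x := c)
    rw [ContinuousAt, rightPow_of_le le_rfl] at h0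
    refine (h0.mono_left nhdsWithin_le_nhds).congr' ?_
    filter_upwards [self_mem_nhdsWithin] with y hy
    rw [slope_def_field, rightPow_of_le le_rfl, sub_zero]
    rcases (Ne.symm hy).lt_or_gt with hcy | hcy
    · rw [rightPow_of_lt hcy, rightPow_of_lt hcy, Real.rpow_sub (sub_pos.mpr hcy), Real.rpow_one]
    · rw [rightPow_of_le hcy.le, rightPow_of_le hcy.le, zero_div]
  · have hpow := (Real.hasDerivAt_rpow_const (p := p) (Or.inl (sub_pos.mpr hx).ne')).comp x
      ((hasDerivAt_id x).sub_const c)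
    rw [rightPow_of_lt hx]
    simpa using hpow.congr_of_eventuallyEq (rightPow_eventuallyEq_of_gt hx)

theorem contDiff_rightPow (n : ℕ) (hp : (n : ℝ) < p) : ContDiff ℝ n (rightPow c p) := by
  induction n generalizing p with
  | zero => exact contDiff_zero.mpr (continuous_rightPow (by simpa using hp))
  | succ n ih =>
    have hp1 : 1 < p := by push_cast at hp; linarith [(n.cast_nonneg : (0 : ℝ) ≤ n)]
    have hderiv : deriv (rightPow c p) = fun x => p * rightPow c (p - 1) x :=
      funext fun x => (hasDerivAt_rightPow hp1 x).deriv
    rw [Nat.cast_succ, contDiff_succ_iff_deriv, hderiv]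
    exact ⟨fun x => (hasDerivAt_rightPow hp1 x).differentiableAt, by simp,
      contDiff_const.mul (ih (by push_cast at hp; linarith))⟩

theorem iteratedDeriv_rightPow_of_lt (k : ℕ) (hx : x < c) :
    iteratedDeriv k (rightPow c p) x = 0 := by
  rw [(rightPow_eventuallyEq_of_lt hx).iteratedDeriv_eq, iteratedDeriv_fun_const_zero]

theorem iteratedDeriv_rightPow_of_gt (k : ℕ) (hx : c < x) :
    iteratedDeriv k (rightPow c p) x = (descPochhammer ℝ k).eval p * (x - c) ^ (p - k) := by
  rw [(rightPow_eventuallyEq_of_gt hx).iteratedDeriv_eq,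
    iteratedDeriv_comp_sub_const (f := fun y : ℝ => y ^ p), iteratedDeriv_eq_iterate]
  exact Real.iter_deriv_rpow_const p (x - c) k

end RightPow

theorem mk_mem_CNclass_of_eqOn {a b : ℝ} {f g : ℝ → ℝ} (E : Finset ℝ)
    (hfg : EqOn f g (Icc a b \ E)) (hg : ContDiff ℝ ∞ g) (R : WithTop ℤ) :
    Cm1.mk a b f ∈ CNclass R a b :=
  ⟨g, Quotient.sound ⟨E, fun _ ht => (hfg ht).symm⟩,
    fun k _ => (contDiff_infty.mp hg k).contDiffOn⟩

section RightPowWitness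

variable {a b c : ℝ}

theorem mk_rightPow_mem_CNpw (p : ℝ) (R : WithTop ℤ) :
    Cm1.mk a b (rightPow c p) ∈ CNpw R a b :=
  ⟨_, rfl, {c}, fun _ _ _ hx => (contDiffAt_rightPow (by simpa using hx.2)).contDiffWithinAt⟩

theorem contDiffReg_rightPow {p : ℝ} {m : ℕ} (hp : (m : ℝ) - 1 < p) (s : Set ℝ) :
    contDiffReg ((m - 1 : ℤ) : WithTop ℤ) (rightPow c p) s := by
  intro k hk
  have hkm : (k : ℝ) ≤ m - 1 := by exact_mod_cast WithTop.coe_le_coe.mp hk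
  exact (contDiff_rightPow k (by linarith)).contDiffOn

theorem mk_rightPow_natCast_mem_CLMN (k : ℕ) (M N : WithTop ℤ) :
    Cm1.mk a b (rightPow c k) ∈ CLMN ((k - 1 : ℤ) : WithTop ℤ) M N a b := by
  refine ⟨⟨_, rfl, contDiffReg_rightPow (by linarith) _⟩, mk_rightPow_mem_CNpw _ _, {c},
    fun x y _ _ _ hsub => ?_⟩
  have hc : c ∉ Ioo x y := fun hc => (hsub hc).2 (by simp)
  rcases le_or_gt y c with hyc | hcy
  · exact mk_mem_CNclass_of_eqOn ∅ (fun t ht => rightPow_of_le (ht.1.2.trans hyc))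
      contDiff_const M
  · refine mk_mem_CNclass_of_eqOn (g := fun t => (t - c) ^ k) {c} (fun t ht => ?_)
      ((contDiff_id.sub contDiff_const).pow k) M
    have hct : c < t := lt_of_le_of_ne ((not_lt.mp fun hxc => hc ⟨hxc, hcy⟩).trans ht.1.1)
      (by simpa [eq_comm] using ht.2)
    rw [rightPow_of_lt hct, Real.rpow_natCast]

theorem mk_rightPow_natCast_notMem_CNclass (hac : a < c) (hcb : c < b) (k : ℕ)
    {L : WithTop ℤ} (hL : ((k : ℤ) : WithTop ℤ) ≤ L) :
    Cm1.mk a b (rightPow c k) ∉ CNclass L a b := by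
  rintro ⟨g, hg, hgL⟩
  obtain ⟨F, hF⟩ := Quotient.exact hg
  have hU : Ioo a b \ F ∈ 𝓝[≠] c :=
    sdiff_mem (mem_nhdsWithin_of_mem_nhds (Ioo_mem_nhds hac hcb)) (compl_finset_mem_nhdsNE F c)
  have hlim : ∀ l ≤ 𝓝[≠] c, Tendsto (iteratedDeriv k (rightPow c k)) l
      (𝓝 (iteratedDerivWithin k g (Icc a b) c)) := fun l hl =>
    tendsto_iteratedDeriv_of_contDiffOn_of_eqOn (hgL k hL) (uniqueDiffOn_Icc (hac.trans hcb))
      ⟨hac.le, hcb.le⟩ (isOpen_Ioo.sdiff F.finite_toSet.isClosed)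
      (fun x hx => Ioo_subset_Icc_self hx.1) (fun x hx => hF x ⟨Ioo_subset_Icc_self hx.1, hx.2⟩)
      (hl.trans (nhdsWithin_le_nhds.trans
        (nhdsWithin_eq_nhds.mpr (Icc_mem_nhds hac hcb)).ge))
      (hl hU)
  have hright : Tendsto (iteratedDeriv k (rightPow c k)) (𝓝[>] c) (𝓝 (k.factorial : ℝ)) := by
    refine tendsto_const_nhds.congr' ?_
    filter_upwards [self_mem_nhdsWithin] with x hx
    rw [iteratedDeriv_rightPow_of_gt k hx, descPochhammer_eval_eq_descFactorial,
      Nat.descFactorial_self, sub_self, Real.rpow_zero, mul_one]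
  have hleft : Tendsto (iteratedDeriv k (rightPow c k)) (𝓝[<] c) (𝓝 0) := by
    refine tendsto_const_nhds.congr' ?_
    filter_upwards [self_mem_nhdsWithin] with x hx
    rw [iteratedDeriv_rightPow_of_lt k hx]
  have h := (tendsto_nhds_unique hright (hlim _ (nhdsGT_le_nhdsNE c))).trans
    (tendsto_nhds_unique hleft (hlim _ (nhdsLT_le_nhdsNE c))).symm
  exact k.factorial_ne_zero (by exact_mod_cast h)

theorem mk_rightPow_mem_CLMN (m : ℕ) {L : WithTop ℤ} (hL : L ≤ ((m - 1 : ℤ) : WithTop ℤ))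
    (N : WithTop ℤ) :
    Cm1.mk a b (rightPow c (m - 1 / 2)) ∈ CLMN L ((m - 1 : ℤ) : WithTop ℤ) N a b :=
  ⟨⟨_, rfl, contDiffReg_mono hL (contDiffReg_rightPow (by linarith) _)⟩,
    mk_rightPow_mem_CNpw _ _, ∅, fun _ _ _ _ _ _ => ⟨_, rfl, contDiffReg_rightPow (by linarith) _⟩⟩

/-- The `m`-th derivative of `(x - c)₊ ^ (m - 1/2)` is a positive multiple of `(x - c) ^ (-1/2)`,
which blows up at `c⁺`. -/
theorem tendsto_iteratedDeriv_rightPow_atTop (m : ℕ) :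
    Tendsto (iteratedDeriv m (rightPow c (m - 1 / 2))) (𝓝[>] c) atTop := by
  have hC : 0 < (descPochhammer ℝ m).eval ((m : ℝ) - 1 / 2) := by
    rw [descPochhammer_eval_eq_prod_range]
    refine Finset.prod_pos fun i hi => ?_
    have : (i : ℝ) + 1 ≤ m := by exact_mod_cast Finset.mem_range.mp hi
    linarith
  have hshift : Tendsto (fun x => x - c) (𝓝[>] c) (𝓝[>] 0) :=
    tendsto_nhdsWithin_iff.mpr ⟨((continuous_sub_right c).tendsto' c 0 (sub_self c)).mono_left
      nhdsWithin_le_nhds, eventually_nhdsWithin_of_forall fun _ hx => mem_Ioi.mpr (sub_pos.mpr hx)⟩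
  refine (((tendsto_rpow_neg_nhdsGT_zero (by norm_num : (-1 / 2 : ℝ) < 0)).comp
    hshift).const_mul_atTop hC).congr' ?_
  filter_upwards [self_mem_nhdsWithin] with x hx
  rw [iteratedDeriv_rightPow_of_gt m hx]
  norm_num

theorem mk_rightPow_notMem_CNclass {y : ℝ} (hcy : c < y) (m : ℕ) {M : WithTop ℤ}
    (hM : ((m : ℤ) : WithTop ℤ) ≤ M) : Cm1.mk c y (rightPow c (m - 1 / 2)) ∉ CNclass M c y := by
  rintro ⟨g, hg, hgM⟩
  obtain ⟨F, hF⟩ := Quotient.exact hg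
  exact not_tendsto_nhds_of_tendsto_atTop (tendsto_iteratedDeriv_rightPow_atTop m) _
    (tendsto_iteratedDeriv_of_contDiffOn_of_eqOn (hgM m hM) (uniqueDiffOn_Icc hcy)
      (left_mem_Icc.mpr hcy.le) (isOpen_Ioo.sdiff F.finite_toSet.isClosed)
      (fun x hx => Ioo_subset_Icc_self hx.1) (fun x hx => hF x ⟨Ioo_subset_Icc_self hx.1, hx.2⟩)
      (nhdsWithin_le_of_mem (Icc_mem_nhdsGT hcy)) (Ioo_sdiff_finset_mem_nhdsGT hcy F))

end RightPowWitness

def iteratedPrimitive (f : ℝ → ℝ) (x₀ : ℝ) : ℕ → ℝ → ℝ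
  | 0 => f
  | n + 1 => fun x => ∫ t in x₀..x, iteratedPrimitive f x₀ n t

section IteratedPrimitive

variable {f : ℝ → ℝ} {x₀ : ℝ}

theorem continuous_iteratedPrimitive_succ (hf : LocallyIntegrable f) (n : ℕ) :
    Continuous (iteratedPrimitive f x₀ (n + 1)) := by
  induction n with
  | zero =>
    exact intervalIntegral.continuous_primitive (μ := volume)
      (fun _ _ => (hf.integrableOn_isCompact isCompact_uIcc).intervalIntegrable) x₀
  | succ n ih => exact intervalIntegral.continuous_primitive ih.intervalIntegrable x₀

theorem deriv_iteratedPrimitive_succ_succ (hf : LocallyIntegrable f) (n : ℕ) :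
    deriv (iteratedPrimitive f x₀ (n + 2)) = iteratedPrimitive f x₀ (n + 1) := by
  have h := continuous_iteratedPrimitive_succ (x₀ := x₀) hf n
  exact funext fun x => intervalIntegral.deriv_integral_right (h.intervalIntegrable _ _)
    h.aestronglyMeasurable.stronglyMeasurableAtFilter h.continuousAt

theorem contDiff_iteratedPrimitive (hf : LocallyIntegrable f) (n : ℕ) :
    ContDiff ℝ n (iteratedPrimitive f x₀ (n + 1)) := by
  induction n with
  | zero => exact contDiff_zero.mpr (continuous_iteratedPrimitive_succ hf 0)
  | succ n ih =>
    rw [Nat.cast_succ, contDiff_succ_iff_deriv, deriv_iteratedPrimitive_succ_succ hf]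
    exact ⟨intervalIntegral.differentiable_integral_of_continuous
      (continuous_iteratedPrimitive_succ hf n), by simp, ih⟩

theorem contDiffReg_iteratedPrimitive (hf : LocallyIntegrable f) (n : ℕ) (s : Set ℝ) :
    contDiffReg ((n - 1 : ℤ) : WithTop ℤ) (iteratedPrimitive f x₀ n) s := by
  intro k hk
  have hkn : (k : ℤ) ≤ n - 1 := WithTop.coe_le_coe.mp hk
  obtain _ | n := n
  · omega
  · exact ((contDiff_iteratedPrimitive hf n).of_le
      (by exact_mod_cast (by omega : k ≤ n))).contDiffOn

theorem iteratedDeriv_succ_iteratedPrimitive_succ (hf : LocallyIntegrable f) (n : ℕ) :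
    iteratedDeriv (n + 1) (iteratedPrimitive f x₀ (n + 1)) =
      deriv (iteratedPrimitive f x₀ 1) := by
  induction n with
  | zero => exact iteratedDeriv_one
  | succ n ih => rw [iteratedDeriv_succ', deriv_iteratedPrimitive_succ_succ hf, ih]

theorem iteratedDeriv_iteratedPrimitive (hf : LocallyIntegrable f) (n : ℕ) {x : ℝ}
    (hx : ContinuousAt f x) : iteratedDeriv n (iteratedPrimitive f x₀ n) x = f x := by
  obtain _ | n := n
  · rfl
  · rw [iteratedDeriv_succ_iteratedPrimitive_succ hf]
    exact intervalIntegral.deriv_integral_right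
      ((hf.integrableOn_isCompact isCompact_uIcc).intervalIntegrable)
      hf.aestronglyMeasurable.stronglyMeasurableAtFilter hx

end IteratedPrimitive

/-- Equal to `1 / (n + 1)` on `(a + 1/(n+1), a + 1/n]`: a bounded monotone function with jumps
accumulating at `a`. -/
def harmonicStaircase (a x : ℝ) : ℝ := if a < x then ((⌊(x - a)⁻¹⌋₊ : ℝ) + 1)⁻¹ else 0

theorem monotone_harmonicStaircase (a : ℝ) : Monotone (harmonicStaircase a) := by
  intro x y hxy
  unfold harmonicStaircase
  split_ifs with hx hy hy
  · gcongr
  · exact absurd (hx.trans_le hxy) hy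
  · positivity
  · exact le_rfl

theorem harmonicStaircase_eqOn (a : ℝ) (n : ℕ) :
    EqOn (harmonicStaircase a) (fun _ => ((n : ℝ) + 1)⁻¹)
      (Ioo (a + ((n : ℝ) + 1)⁻¹) (a + (n : ℝ)⁻¹)) := by
  rintro x ⟨h1, h2⟩
  have hxa : 0 < x - a := by linarith [inv_pos.mpr (n.cast_add_one_pos (α := ℝ))]
  have hn : 0 < (n : ℝ) := by
    rcases n.eq_zero_or_pos with rfl | hn
    · simp only [Nat.cast_zero, inv_zero, add_zero] at h2; linarith
    · exact_mod_cast hn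
  have hfloor : ⌊(x - a)⁻¹⌋₊ = n := (Nat.floor_eq_iff (inv_nonneg.mpr hxa.le)).mpr
    ⟨((lt_inv_comm₀ hn hxa).mpr (by linarith)).le,
      (inv_lt_comm₀ hxa n.cast_add_one_pos).mpr (by linarith)⟩
  rw [harmonicStaircase, if_pos (by linarith), hfloor]

theorem iteratedDeriv_iteratedPrimitive_harmonicStaircase_eqOn (a x₀ : ℝ) (n m : ℕ) :
    EqOn (iteratedDeriv n (iteratedPrimitive (harmonicStaircase a) x₀ n))
      (fun _ => ((m : ℝ) + 1)⁻¹) (Ioo (a + ((m : ℝ) + 1)⁻¹) (a + (m : ℝ)⁻¹)) := by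
  intro x hx
  have hloc : harmonicStaircase a =ᶠ[𝓝 x] fun _ => ((m : ℝ) + 1)⁻¹ :=
    eventually_of_mem (isOpen_Ioo.mem_nhds hx) (harmonicStaircase_eqOn a m)
  rw [iteratedDeriv_iteratedPrimitive (monotone_harmonicStaircase a).locallyIntegrable n
    (continuousAt_const.congr_of_eventuallyEq hloc)]
  exact hloc.eq_of_nhds

section StaircaseWitness

variable {a b : ℝ}

theorem mk_iteratedPrimitive_mem_CLMN {f : ℝ → ℝ} (hf : LocallyIntegrable f)
    (x₀ : ℝ) (n : ℕ) {L M : WithTop ℤ} (hLM : L ≤ M) (hM : M ≤ ((n - 1 : ℤ) : WithTop ℤ)) :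
    Cm1.mk a b (iteratedPrimitive f x₀ n) ∈ CLMN L M ((n - 1 : ℤ) : WithTop ℤ) a b :=
  ⟨⟨_, rfl, contDiffReg_mono (hLM.trans hM) (contDiffReg_iteratedPrimitive hf n _)⟩,
    ⟨_, rfl, ∅, contDiffReg_iteratedPrimitive hf n _⟩, ∅,
    fun _ _ _ _ _ _ => ⟨_, rfl, contDiffReg_mono hM (contDiffReg_iteratedPrimitive hf n _)⟩⟩

theorem exists_add_inv_succ_mem_Ioo_sdiff (hab : a < b) (G : Finset ℝ) :
    ∃ m : ℕ, 1 ≤ m ∧ a + ((m : ℝ) + 1)⁻¹ ∈ Ioo a b \ G := by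
  have htend : Tendsto (fun m : ℕ => a + ((m : ℝ) + 1)⁻¹) atTop (𝓝[>] a) := by
    refine tendsto_nhdsWithin_iff.mpr ⟨?_, Eventually.of_forall fun m => ?_⟩
    · simpa using tendsto_const_nhds.add (tendsto_one_div_add_atTop_nhds_zero_nat (𝕜 := ℝ))
    · exact lt_add_of_pos_right a (inv_pos.mpr m.cast_add_one_pos)
  exact ((eventually_ge_atTop 1).and (htend (Ioo_sdiff_finset_mem_nhdsGT hab G))).exists

theorem mk_iteratedPrimitive_harmonicStaircase_notMem_CNpw (hab : a < b) (n : ℕ)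
    {N : WithTop ℤ} (hN : ((n : ℤ) : WithTop ℤ) ≤ N) :
    Cm1.mk a b (iteratedPrimitive (harmonicStaircase a) a n) ∉ CNpw N a b := by
  rintro ⟨g, hg, E, hgN⟩
  obtain ⟨F, hF⟩ := Quotient.exact hg
  obtain ⟨m, hm, ht⟩ := exists_add_inv_succ_mem_Ioo_sdiff hab (E ∪ F)
  set t := a + ((m : ℝ) + 1)⁻¹
  set s := Ioo a b \ ↑(E ∪ F)
  have hs : IsOpen s := isOpen_Ioo.sdiff (E ∪ F).finite_toSet.isClosed
  have hsE : s ⊆ Icc a b \ E :=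
    fun x hx => ⟨Ioo_subset_Icc_self hx.1, fun h => hx.2 (by simp [h])⟩
  have hlim (u : Set ℝ) : Tendsto (iteratedDeriv n (iteratedPrimitive (harmonicStaircase a) a n))
      (𝓝[u] t) (𝓝 (iteratedDerivWithin n g s t)) :=
    have hsu : s ∈ 𝓝[u] t := mem_nhdsWithin_of_mem_nhds (hs.mem_nhds ht)
    tendsto_iteratedDeriv_of_contDiffOn_of_eqOn ((hgN n hN).mono hsE) hs.uniqueDiffOn ht hs
      subset_rfl (fun x hx => hF x ⟨(hsE hx).1, fun h => hx.2 (by simp [h])⟩)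
      (nhdsWithin_le_of_mem hsu) hsu
  have hleft : Tendsto (iteratedDeriv n (iteratedPrimitive (harmonicStaircase a) a n))
      (𝓝[<] t) (𝓝 (((m + 1 : ℕ) : ℝ) + 1)⁻¹) := by
    refine tendsto_const_nhds.congr' (eventually_of_mem
      (Ioo_mem_nhdsLT (a := a + (((m + 1 : ℕ) : ℝ) + 1)⁻¹) ?_)
      fun x hx => (iteratedDeriv_iteratedPrimitive_harmonicStaircase_eqOn a a n (m + 1) ?_).symm)
    · simp only [t]; gcongr; linarith
    · simpa [t, add_assoc] using hx
  have hright : Tendsto (iteratedDeriv n (iteratedPrimitive (harmonicStaircase a) a n))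
      (𝓝[>] t) (𝓝 ((m : ℝ) + 1)⁻¹) :=
    tendsto_const_nhds.congr' (eventually_of_mem
      (Ioo_mem_nhdsGT (by simp only [t]; gcongr; linarith))
      fun x hx => (iteratedDeriv_iteratedPrimitive_harmonicStaircase_eqOn a a n m hx).symm)
  have h := (tendsto_nhds_unique hleft (hlim _)).trans (tendsto_nhds_unique hright (hlim _)).symm
  push_cast at h
  have := inv_injective h
  linarith

end StaircaseWitness

section Necessity

variable {a b : ℝ} {L M N L' M' N' : WithTop ℤ}

theorem le_of_CLMN_subset_left (hab : a < b) (hL' : -1 ≤ L')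
    (h : CLMN L' M' N' a b ⊆ CLMN L M N a b) : L ≤ L' := by
  by_contra! hlt
  obtain ⟨k, rfl, hk⟩ := exists_natCast_sub_one_of_lt hL' hlt
  exact mk_rightPow_natCast_notMem_CNclass (c := (a + b) / 2) (by linarith) (by linarith) k hk
    (h (mk_rightPow_natCast_mem_CLMN k M' N')).1

theorem le_of_CLMN_subset_middle (hab : a < b) (hL' : -1 ≤ L') (hLM' : L' ≤ M')
    (h : CLMN L' M' N' a b ⊆ CLMN L M N a b) : M ≤ M' := by
  by_contra! hlt
  obtain ⟨m, rfl, hm⟩ := exists_natCast_sub_one_of_lt (hL'.trans hLM') hlt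
  obtain ⟨-, -, E, hE⟩ := h (mk_rightPow_mem_CLMN (c := a) m hLM' N')
  obtain ⟨y, hay, hy⟩ := mem_nhdsGT_iff_exists_Ioo_subset.mp (Ioo_sdiff_finset_mem_nhdsGT hab E)
  exact mk_rightPow_notMem_CNclass (lt_min hay hab) m hm (hE a (min y b) le_rfl
    (min_le_right _ _) (lt_min hay hab) ((Ioo_subset_Ioo_right (min_le_left _ _)).trans hy))

theorem le_of_CLMN_subset_right (hab : a < b) (hL' : -1 ≤ L') (hLM' : L' ≤ M') (hMN' : M' ≤ N')
    (h : CLMN L' M' N' a b ⊆ CLMN L M N a b) : N ≤ N' := by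
  by_contra! hlt
  obtain ⟨n, rfl, hn⟩ := exists_natCast_sub_one_of_lt ((hL'.trans hLM').trans hMN') hlt
  exact mk_iteratedPrimitive_harmonicStaircase_notMem_CNpw hab n hn
    (h (mk_iteratedPrimitive_mem_CLMN (monotone_harmonicStaircase a).locallyIntegrable a n
      hLM' hMN')).2.1

end Necessity

theorem CLMN_subset_iff_general (a b : ℝ) (hab : a < b)
    (L M N L' M' N' : WithTop ℤ)
    (hL' : -1 ≤ L') (hLM' : L' ≤ M') (hMN' : M' ≤ N') :
    CLMN L' M' N' a b ⊆ CLMN L M N a b ↔ (L ≤ L' ∧ M ≤ M' ∧ N ≤ N') :=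
  ⟨fun h => ⟨le_of_CLMN_subset_left hab hL' h, le_of_CLMN_subset_middle hab hL' hLM' h,
    le_of_CLMN_subset_right hab hL' hLM' hMN' h⟩,
    fun ⟨hL, hM, hN⟩ => CLMN_subset_CLMN hL hM hN⟩

/-- For a proper interval `[a,b]` and regularity triples
`-1 ≤ L ≤ M ≤ N`, `-1 ≤ L' ≤ M' ≤ N'` in `{-1,0,1,…} ∪ {∞}`,
`C^{L',M',N'}[a,b] ⊆ C^{L,M,N}[a,b]` if and only if `L ≤ L'`, `M ≤ M'` and `N ≤ N'`. -/
theorem CLMN_subset_iff (a b : ℝ) (hab : a < b)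
    (L M N L' M' N' : WithTop ℤ)
    (hL : -1 ≤ L) (hLM : L ≤ M) (hMN : M ≤ N)
    (hL' : -1 ≤ L') (hLM' : L' ≤ M') (hMN' : M' ≤ N') :
    CLMN L' M' N' a b ⊆ CLMN L M N a b ↔ (L ≤ L' ∧ M ≤ M' ∧ N ≤ N') :=
  CLMN_subset_iff_general a b hab L M N L' M' N' hL' hLM' hMN'
end
end

section
/- Let a ≤ b < c ≤ d be real numbers, let −1 ≤ L ≤ M ≤ N be parameters in {−1, 0, 1, 2, …} ∪ {∞}, and let f ∈ C^{L,M,N}[a,c] and g ∈ C^{L,M,N}[b,d] satisfy f|[b,c] = g|[b,c]. Then there exists a unique h ∈ C^{L,M,N}[a,d] with h|[a,c] = f and h|[b,d] = g; that is, the assignment [a,b] ↦ C^{L,M,N}[a,b] with the restriction maps induced by restriction of representatives is a sheaf of real vector spaces on the proper compact intervals. -/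
noncomputable section

open Set Filter Topology

/-- Restriction of a class of `f` is the class of `f`. -/
lemma Cm1.res_mk {a b : ℝ} (x y : ℝ) (hax : a ≤ x) (hyb : y ≤ b) (f : ℝ → ℝ) :
    Cm1.res x y hax hyb (Cm1.mk a b f) = Cm1.mk x y f := rfl

/-- Two continuous functions on `[b,c]` (with `b < c`) agreeing off a finite set agree
everywhere on `[b,c]`. -/
lemma eqOn_of_finEq_cont {b c : ℝ} (hbc : b < c) {u v : ℝ → ℝ}
    (hu : ContinuousOn u (Set.Icc b c)) (hv : ContinuousOn v (Set.Icc b c))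
    {E : Finset ℝ} (h : ∀ t ∈ Set.Icc b c \ (E : Set ℝ), u t = v t) :
    ∀ t ∈ Set.Icc b c, u t = v t := by
  intro t ht
  have hd : Dense ((E : Set ℝ))ᶜ := (E.countable_toSet).dense_compl ℝ
  have h1 : Set.Ioo b c ⊆ closure (Set.Ioo b c ∩ ((E : Set ℝ))ᶜ) :=
    hd.open_subset_closure_inter isOpen_Ioo
  have hcl : t ∈ closure (Set.Icc b c \ (E : Set ℝ)) := by
    have h2 : t ∈ closure (Set.Ioo b c) := by
      rw [closure_Ioo hbc.ne]; exact ht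
    have h3 : closure (Set.Ioo b c) ⊆ closure (Set.Icc b c \ (E : Set ℝ)) := by
      refine closure_minimal (h1.trans (closure_mono ?_)) isClosed_closure
      intro s hs; exact ⟨Set.Ioo_subset_Icc_self hs.1, hs.2⟩
    exact h3 h2
  have hne : (𝓝[Set.Icc b c \ (E : Set ℝ)] t).NeBot :=
    mem_closure_iff_nhdsWithin_neBot.1 hcl
  have hu' : Filter.Tendsto u (𝓝[Set.Icc b c \ (E : Set ℝ)] t) (𝓝 (u t)) :=
    (hu t ht).mono Set.diff_subset
  have hv' : Filter.Tendsto u (𝓝[Set.Icc b c \ (E : Set ℝ)] t) (𝓝 (v t)) := by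
    refine Filter.Tendsto.congr' ?_ ((hv t ht).mono Set.diff_subset)
    filter_upwards [self_mem_nhdsWithin] with s hs using (h s hs).symm
  exact tendsto_nhds_unique hu' hv'

/-- For `a ≤ b < c ≤ d` and `-1 ≤ L ≤ M ≤ N`, two sections
`f ∈ C^{L,M,N}[a,c]` and `g ∈ C^{L,M,N}[b,d]` which agree on `[b,c]` glue uniquely to
a section `h ∈ C^{L,M,N}[a,d]` with `h|[a,c] = f` and `h|[b,d] = g`; that is,
`[a,b] ↦ C^{L,M,N}[a,b]` is a sheaf on the proper compact intervals. -/
theorem CLMN_glue (a b c d : ℝ) (hab : a ≤ b) (hbc : b < c) (hcd : c ≤ d)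
    (L M N : WithTop ℤ) (hL : -1 ≤ L) (hLM : L ≤ M) (hMN : M ≤ N)
    (f : Cm1 a c) (g : Cm1 b d)
    (hf : f ∈ CLMN L M N a c) (hg : g ∈ CLMN L M N b d)
    (hagree : Cm1.res b c hab le_rfl f = Cm1.res b c le_rfl hcd g) :
    ∃! h : Cm1 a d, h ∈ CLMN L M N a d ∧
      Cm1.res a c le_rfl hcd h = f ∧
      Cm1.res b d hab le_rfl h = g := by
  obtain ⟨F, rfl⟩ := Quotient.exists_rep f
  obtain ⟨G, rfl⟩ := Quotient.exists_rep g
  have hFf : Cm1.mk a c F = ⟦F⟧ := rfl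
  have hGg : Cm1.mk b d G = ⟦G⟧ := rfl
  obtain ⟨E₀, hE₀⟩ : finEq b c F G := Quotient.exact hagree
  set H : ℝ → ℝ := fun t => if t ≤ b then F t else G t with hH
  have hHF : ∀ t, t ≤ b → H t = F t := fun t ht => if_pos ht
  have hHG : ∀ t, b < t → H t = G t := fun t ht => if_neg (not_le.2 ht)
  -- restriction to [a,c] is f
  have hresf : Cm1.res a c le_rfl hcd (Cm1.mk a d H) = ⟦F⟧ := by
    rw [Cm1.res_mk]
    refine Quotient.sound ⟨E₀, fun t ht => ?_⟩
    by_cases htb : t ≤ b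
    · exact hHF t htb
    · rw [hHG t (not_le.1 htb)]
      exact (hE₀ t ⟨⟨(not_le.1 htb).le, ht.1.2⟩, ht.2⟩).symm
  -- restriction to [b,d] is g
  have hresg : Cm1.res b d hab le_rfl (Cm1.mk a d H) = ⟦G⟧ := by
    rw [Cm1.res_mk]
    refine Quotient.sound ⟨E₀, fun t ht => ?_⟩
    by_cases htb : t ≤ b
    · have htb' : t = b := le_antisymm htb ht.1.1
      rw [hHF t htb, htb']
      exact hE₀ b ⟨⟨le_rfl, hbc.le⟩, htb' ▸ ht.2⟩
    · exact hHG t (not_le.1 htb)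
  -- membership: the C^L part
  have hCL : Cm1.mk a d H ∈ CNclass L a d := by
    by_cases hL0 : ((0 : ℤ) : WithTop ℤ) ≤ L
    · obtain ⟨F', hF'mk, hF'⟩ := hf.1
      obtain ⟨G', hG'mk, hG'⟩ := hg.1
      obtain ⟨E₁, hE₁⟩ : finEq a c F' F := Quotient.exact hF'mk
      obtain ⟨E₂, hE₂⟩ : finEq b d G' G := Quotient.exact hG'mk
      -- F' and G' agree off a finite set on [b,c]
      have hagr : ∀ t ∈ Set.Icc b c \ ((E₀ ∪ E₁ ∪ E₂ : Finset ℝ) : Set ℝ), F' t = G' t := by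
        intro t ht
        have htE : t ∉ (E₀ : Set ℝ) ∧ t ∉ (E₁ : Set ℝ) ∧ t ∉ (E₂ : Set ℝ) := by
          have := ht.2; simp only [Finset.coe_union, Set.mem_union] at this; tauto
        have h1 : F' t = F t := hE₁ t ⟨⟨hab.trans ht.1.1, ht.1.2⟩, htE.2.1⟩
        have h2 : F t = G t := hE₀ t ⟨ht.1, htE.1⟩
        have h3 : G t = G' t := (hE₂ t ⟨⟨ht.1.1, ht.1.2.trans hcd⟩, htE.2.2⟩).symm
        rw [h1, h2, h3]
      have hF'c : ContinuousOn F' (Set.Icc a c) := by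
        have := hF' 0 (by exact_mod_cast hL0)
        exact this.continuousOn
      have hG'c : ContinuousOn G' (Set.Icc b d) := by
        have := hG' 0 (by exact_mod_cast hL0)
        exact this.continuousOn
      have heq : ∀ t ∈ Set.Icc b c, F' t = G' t :=
        eqOn_of_finEq_cont hbc
          (hF'c.mono (Set.Icc_subset_Icc hab le_rfl))
          (hG'c.mono (Set.Icc_subset_Icc le_rfl hcd)) hagr
      set H' : ℝ → ℝ := fun t => if t ≤ c then F' t else G' t with hH'
      have hH'F : ∀ t ∈ Set.Icc a c, H' t = F' t := fun t ht => if_pos ht.2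
      have hH'G : ∀ t ∈ Set.Icc b d, H' t = G' t := by
        intro t ht
        by_cases htc : t ≤ c
        · show (if t ≤ c then F' t else G' t) = G' t
          rw [if_pos htc]; exact heq t ⟨ht.1, htc⟩
        · show (if t ≤ c then F' t else G' t) = G' t
          rw [if_neg htc]
      refine ⟨H', ?_, ?_⟩
      · refine Quotient.sound ⟨E₀ ∪ E₁ ∪ E₂, fun t ht => ?_⟩
        have htE : t ∉ (E₀ : Set ℝ) ∧ t ∉ (E₁ : Set ℝ) ∧ t ∉ (E₂ : Set ℝ) := by
          have := ht.2; simp only [Finset.coe_union, Set.mem_union] at this; tauto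
        by_cases htb : t ≤ b
        · rw [hHF t htb, hH'F t ⟨ht.1.1, htb.trans hbc.le⟩]
          exact hE₁ t ⟨⟨ht.1.1, htb.trans hbc.le⟩, htE.2.1⟩
        · rw [hHG t (not_le.1 htb), hH'G t ⟨(not_le.1 htb).le, ht.1.2⟩]
          exact hE₂ t ⟨⟨(not_le.1 htb).le, ht.1.2⟩, htE.2.2⟩
      · intro k hk
        intro x hx
        by_cases hxb : x ≤ b
        · have hC : ContDiffWithinAt ℝ k F' (Set.Icc a c) x :=
            hF' k hk x ⟨hx.1, hxb.trans hbc.le⟩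
          have hsub : Set.Icc a d ∩ Set.Iio c ⊆ Set.Icc a c :=
            fun t ht => ⟨ht.1.1, ht.2.le⟩
          have hC2 : ContDiffWithinAt ℝ k H' (Set.Icc a d ∩ Set.Iio c) x := by
            refine (hC.mono hsub).congr (fun t ht => ?_) ?_
            · exact hH'F t (hsub ht)
            · exact hH'F x ⟨hx.1, hxb.trans hbc.le⟩
          exact hC2.mono_of_mem_nhdsWithin
            (inter_mem_nhdsWithin _ (isOpen_Iio.mem_nhds (lt_of_le_of_lt hxb hbc)))
        · have hxb' : b < x := not_le.1 hxb
          have hC : ContDiffWithinAt ℝ k G' (Set.Icc b d) x :=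
            hG' k hk x ⟨hxb'.le, hx.2⟩
          have hsub : Set.Icc a d ∩ Set.Ioi b ⊆ Set.Icc b d :=
            fun t ht => ⟨ht.2.le, ht.1.2⟩
          have hC2 : ContDiffWithinAt ℝ k H' (Set.Icc a d ∩ Set.Ioi b) x := by
            refine (hC.mono hsub).congr (fun t ht => ?_) ?_
            · exact hH'G t (hsub ht)
            · exact hH'G x ⟨hxb'.le, hx.2⟩
          exact hC2.mono_of_mem_nhdsWithin
            (inter_mem_nhdsWithin _ (isOpen_Ioi.mem_nhds hxb'))
    · exact ⟨H, rfl, fun k hk => absurd (le_trans (by exact_mod_cast Int.ofNat_nonneg k) hk) hL0⟩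
  -- membership: the piecewise C^N part
  have hCN : Cm1.mk a d H ∈ CNpw N a d := by
    obtain ⟨F₂, hF₂mk, Ef, hF₂⟩ := hf.2.1
    obtain ⟨G₂, hG₂mk, Eg, hG₂⟩ := hg.2.1
    obtain ⟨E₁, hE₁⟩ : finEq a c F₂ F := Quotient.exact hF₂mk
    obtain ⟨E₂, hE₂⟩ : finEq b d G₂ G := Quotient.exact hG₂mk
    set H₂ : ℝ → ℝ := fun t => if t ≤ b then F₂ t else G₂ t with hH₂
    refine ⟨H₂, ?_, Ef ∪ Eg ∪ {b}, ?_⟩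
    · refine Quotient.sound ⟨E₁ ∪ E₂, fun t ht => ?_⟩
      have htE : t ∉ (E₁ : Set ℝ) ∧ t ∉ (E₂ : Set ℝ) := by
        have := ht.2; simp only [Finset.coe_union, Set.mem_union] at this; tauto
      by_cases htb : t ≤ b
      · rw [hHF t htb]
        show (if t ≤ b then F₂ t else G₂ t) = F t
        rw [if_pos htb]
        exact hE₁ t ⟨⟨ht.1.1, htb.trans hbc.le⟩, htE.1⟩
      · rw [hHG t (not_le.1 htb)]
        show (if t ≤ b then F₂ t else G₂ t) = G t
        rw [if_neg htb]
        exact hE₂ t ⟨⟨(not_le.1 htb).le, ht.1.2⟩, htE.2⟩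
    · intro k hk x hx
      have hxE : x ∉ (Ef : Set ℝ) ∧ x ∉ (Eg : Set ℝ) ∧ x ≠ b := by
        have := hx.2
        simp only [Finset.coe_union, Set.mem_union, Finset.coe_singleton,
          Set.mem_singleton_iff] at this
        tauto
      by_cases hxb : x ≤ b
      · have hxb' : x < b := lt_of_le_of_ne hxb hxE.2.2
        have hC : ContDiffWithinAt ℝ k F₂ (Set.Icc a c \ (Ef : Set ℝ)) x :=
          hF₂ k hk x ⟨⟨hx.1.1, hxb.trans hbc.le⟩, hxE.1⟩
        have hsub : (Set.Icc a d \ ((Ef ∪ Eg ∪ {b} : Finset ℝ) : Set ℝ)) ∩ Set.Iio b ⊆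
            Set.Icc a c \ (Ef : Set ℝ) := by
          rintro t ⟨⟨ht1, ht2⟩, ht3⟩
          refine ⟨⟨ht1.1, ht3.le.trans hbc.le⟩, fun hm => ht2 ?_⟩
          simp [hm]
        have hC2 : ContDiffWithinAt ℝ k H₂
            ((Set.Icc a d \ ((Ef ∪ Eg ∪ {b} : Finset ℝ) : Set ℝ)) ∩ Set.Iio b) x := by
          refine (hC.mono hsub).congr (fun t ht => if_pos ht.2.le) (if_pos hxb)
        exact hC2.mono_of_mem_nhdsWithin (inter_mem_nhdsWithin _ (isOpen_Iio.mem_nhds hxb'))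
      · have hxb' : b < x := not_le.1 hxb
        have hC : ContDiffWithinAt ℝ k G₂ (Set.Icc b d \ (Eg : Set ℝ)) x :=
          hG₂ k hk x ⟨⟨hxb'.le, hx.1.2⟩, hxE.2.1⟩
        have hsub : (Set.Icc a d \ ((Ef ∪ Eg ∪ {b} : Finset ℝ) : Set ℝ)) ∩ Set.Ioi b ⊆
            Set.Icc b d \ (Eg : Set ℝ) := by
          rintro t ⟨⟨ht1, ht2⟩, ht3⟩
          refine ⟨⟨ht3.le, ht1.2⟩, fun hm => ht2 ?_⟩
          simp [hm]
        have hC2 : ContDiffWithinAt ℝ k H₂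
            ((Set.Icc a d \ ((Ef ∪ Eg ∪ {b} : Finset ℝ) : Set ℝ)) ∩ Set.Ioi b) x := by
          refine (hC.mono hsub).congr (fun t ht => if_neg (not_le.2 ht.2)) (if_neg hxb)
        exact hC2.mono_of_mem_nhdsWithin (inter_mem_nhdsWithin _ (isOpen_Ioi.mem_nhds hxb'))
  -- membership: the C^M part on open subintervals
  have hCM : ∃ E : Finset ℝ, ∀ (x y : ℝ) (hax : a ≤ x) (hyd : y ≤ d), x < y →
      Set.Ioo x y ⊆ Set.Ioo a d \ (E : Set ℝ) →
      Cm1.res x y hax hyd (Cm1.mk a d H) ∈ CNclass M x y := by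
    obtain ⟨Ef, hEf⟩ := hf.2.2
    obtain ⟨Eg, hEg⟩ := hg.2.2
    refine ⟨Ef ∪ Eg ∪ {c}, fun x y hax hyd hxy hsub => ?_⟩
    have hcnot : c ∉ Set.Ioo x y := fun hc => by
      have := (hsub hc).2
      simp at this
    have hcase : y ≤ c ∨ c ≤ x := by
      by_contra hcon
      push_neg at hcon
      exact hcnot ⟨hcon.2, hcon.1⟩
    rcases hcase with hyc | hcx
    · -- use f
      have hsub' : Set.Ioo x y ⊆ Set.Ioo a c \ (Ef : Set ℝ) := by
        intro t ht
        obtain ⟨ht1, ht2⟩ := hsub ht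
        refine ⟨⟨ht1.1, lt_of_lt_of_le ht.2 hyc⟩, fun hm => ht2 ?_⟩
        simp [hm]
      have hmem := hEf x y hax hyc hxy hsub'
      have : Cm1.res x y hax hyd (Cm1.mk a d H) = Cm1.res x y hax hyc ⟦F⟧ := by
        rw [Cm1.res_mk]
        show Cm1.mk x y H = Cm1.res x y hax hyc (Cm1.mk a c F)
        rw [Cm1.res_mk]
        refine Quotient.sound ⟨E₀, fun t ht => ?_⟩
        by_cases htb : t ≤ b
        · exact hHF t htb
        · rw [hHG t (not_le.1 htb)]
          exact (hE₀ t ⟨⟨(not_le.1 htb).le, ht.1.2.trans hyc⟩, ht.2⟩).symm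
      rw [this]
      exact hmem
    · -- use g
      have hbx : b ≤ x := hbc.le.trans hcx
      have hsub'' : Set.Ioo x y ⊆ Set.Ioo b d \ (Eg : Set ℝ) := by
        intro t ht
        obtain ⟨ht1, ht2⟩ := hsub ht
        refine ⟨⟨hbc.trans (lt_of_le_of_lt hcx ht.1), ht1.2⟩, fun hm => ht2 ?_⟩
        simp [hm]
      have hmem := hEg x y hbx hyd hxy hsub''
      have : Cm1.res x y hax hyd (Cm1.mk a d H) = Cm1.res x y hbx hyd ⟦G⟧ := by
        rw [Cm1.res_mk]
        show Cm1.mk x y H = Cm1.res x y hbx hyd (Cm1.mk b d G)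
        rw [Cm1.res_mk]
        refine Quotient.sound ⟨∅, fun t ht => ?_⟩
        exact hHG t (lt_of_lt_of_le hbc (hcx.trans ht.1.1))
      rw [this]
      exact hmem
  refine ⟨Cm1.mk a d H, ⟨⟨hCL, hCN, hCM⟩, hresf, hresg⟩, ?_⟩
  -- uniqueness
  rintro h' ⟨-, h1, h2⟩
  obtain ⟨H₃, rfl⟩ := Quotient.exists_rep h'
  obtain ⟨EA, hEA⟩ : finEq a c H₃ F := Quotient.exact h1
  obtain ⟨EB, hEB⟩ : finEq b d H₃ G := Quotient.exact h2
  refine Quotient.sound ⟨EA ∪ EB, fun t ht => ?_⟩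
  have htE : t ∉ (EA : Set ℝ) ∧ t ∉ (EB : Set ℝ) := by
    have := ht.2; simp only [Finset.coe_union, Set.mem_union] at this; tauto
  by_cases htb : t ≤ b
  · rw [hHF t htb]
    exact hEA t ⟨⟨ht.1.1, htb.trans hbc.le⟩, htE.1⟩
  · rw [hHG t (not_le.1 htb)]
    exact hEB t ⟨⟨(not_le.1 htb).le, ht.1.2⟩, htE.2⟩
end
end

section
/- The function x : ℝ → ℝ, x(t) = |t|^{3/2}, is continuously differentiable on ℝ with x'(t) = (3/2)·sgn(t)·|t|^{1/2} (and x'(0) = 0), is not twice differentiable at 0, and satisfies, for every t ≠ 0, t²·x''(t) + 4t·x'(t) + x(t) = (31/4)·|t|^{3/2}. -/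
/-!
Away from `0` the chain rule gives `x' t = p · sgn t · |t| ^ (p - 1)`, and since `sgn` is locally
constant there, `x'' t = p (p - 1) |t| ^ (p - 2)`. Hence `t x' = p x` and `t² x'' = p (p - 1) x`,
so for `p = 3/2` the left-hand side is `(3/4 + 6 + 1) x = (31/4) x`. At `0` the derivative
vanishes, while the right difference quotient of `x'` is `p s ^ (p - 2)`, which blows up
for `p < 2`.
-/

open Filter Topology

namespace Real

theorem sign_eq_coe_sign (t : ℝ) : Real.sign t = (SignType.sign t : ℝ) := by
  rcases lt_trichotomy t 0 with h | rfl | h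
  · simp [Real.sign_of_neg h, _root_.sign_neg h]
  · simp
  · simp [Real.sign_of_pos h, _root_.sign_pos h]

theorem sign_eventuallyEq {t : ℝ} (ht : t ≠ 0) :
    Real.sign =ᶠ[𝓝 t] fun _ => Real.sign t := by
  have : ∀ᶠ s in 𝓝 t, SignType.sign s = SignType.sign t :=
    continuousAt_sign_of_ne_zero ht ((isOpen_discrete {SignType.sign t}).mem_nhds rfl)
  filter_upwards [this] with s hs
  rw [sign_eq_coe_sign, sign_eq_coe_sign, hs]

end Real

section AbsRpow

variable {p : ℝ}

theorem hasDerivAt_abs_rpow_of_ne_zero {t : ℝ} (ht : t ≠ 0) :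
    HasDerivAt (fun s : ℝ => |s| ^ p) (p * Real.sign t * |t| ^ (p - 1)) t := by
  refine ((Real.hasDerivAt_rpow_const (Or.inl (abs_ne_zero.2 ht))).comp t
    (hasDerivAt_abs ht)).congr_deriv ?_
  rw [Real.sign_eq_coe_sign]
  ring

theorem hasDerivAt_sign_mul_abs_rpow {t : ℝ} (ht : t ≠ 0) :
    HasDerivAt (fun s : ℝ => Real.sign s * |s| ^ p) (p * |t| ^ (p - 1)) t := by
  have hsign : Real.sign t * Real.sign t = 1 := by
    rcases Real.sign_apply_eq_of_ne_zero t ht with h | h <;> simp [h]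
  have h := (hasDerivAt_abs_rpow_of_ne_zero (p := p) ht).const_mul (Real.sign t)
  refine (h.congr_of_eventuallyEq ?_).congr_deriv ?_
  · filter_upwards [Real.sign_eventuallyEq ht] with s hs
    rw [hs]
  · linear_combination p * |t| ^ (p - 1) * hsign

theorem not_differentiableAt_sign_mul_abs_rpow_zero (hp : p < 1) :
    ¬ DifferentiableAt ℝ (fun t : ℝ => Real.sign t * |t| ^ p) 0 := by
  intro h
  have hblowup : Tendsto (fun s : ℝ => s ^ (p - 1)) (𝓝[>] 0) atTop :=
    tendsto_rpow_neg_nhdsGT_zero (by linarith)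
  refine not_tendsto_nhds_of_tendsto_atTop (hblowup.congr' ?_) _
    h.hasDerivAt.tendsto_slope_zero_right
  filter_upwards [self_mem_nhdsWithin] with s (hs : 0 < s)
  simp [Real.sign_of_pos hs, abs_of_pos hs, Real.rpow_sub_one hs.ne', div_eq_inv_mul]

theorem deriv_abs_rpow (hp : 1 < p) :
    deriv (fun s : ℝ => |s| ^ p) = fun t => p * Real.sign t * |t| ^ (p - 1) := by
  funext t
  rcases eq_or_ne t 0 with rfl | ht
  · simpa using (hasDerivAt_abs_rpow 0 hp).deriv
  · exact (hasDerivAt_abs_rpow_of_ne_zero ht).deriv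

theorem not_differentiableAt_deriv_abs_rpow_zero (hp : 1 < p) (hp' : p < 2) :
    ¬ DifferentiableAt ℝ (deriv fun s : ℝ => |s| ^ p) 0 := by
  rw [deriv_abs_rpow hp]
  intro h
  apply not_differentiableAt_sign_mul_abs_rpow_zero (p := p - 1) (by linarith)
  have hp0 : p ≠ 0 := by linarith
  simpa [mul_assoc, hp0] using h.const_mul p⁻¹

theorem mul_deriv_abs_rpow (hp : 1 < p) (t : ℝ) :
    t * deriv (fun s : ℝ => |s| ^ p) t = p * |t| ^ p := by
  have hts : t * Real.sign t = |t| := by rw [Real.sign_eq_coe_sign, self_mul_sign]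
  calc t * deriv (fun s : ℝ => |s| ^ p) t = p * (t * Real.sign t * |t| ^ (p - 1)) := by
        rw [congrFun (deriv_abs_rpow hp) t]; ring
    _ = p * |t| ^ (1 + (p - 1)) := by
        rw [hts, Real.rpow_one_add' (abs_nonneg t) (by linarith)]
    _ = p * |t| ^ p := by ring_nf

theorem sq_mul_deriv_deriv_abs_rpow (hp : 1 < p) {t : ℝ} (ht : t ≠ 0) :
    t ^ 2 * deriv (deriv fun s : ℝ => |s| ^ p) t = p * (p - 1) * |t| ^ p := by
  have h := (hasDerivAt_sign_mul_abs_rpow (p := p - 1) ht).const_mul p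
  simp only [← mul_assoc] at h
  rw [deriv_abs_rpow hp, h.deriv, ← sq_abs, sub_sub, show (1 + 1 : ℝ) = 2 by norm_num,
    Real.rpow_sub (abs_pos.2 ht), Real.rpow_two]
  field_simp

end AbsRpow

/-- The function `x t = |t|^{3/2}` is continuously differentiable on
`ℝ` with `x' t = (3/2)·sgn t·|t|^{1/2}` (so `x' 0 = 0`), is not twice differentiable at
`0`, and satisfies `t²·x'' t + 4t·x' t + x t = (31/4)·|t|^{3/2}` for every `t ≠ 0`. -/
theorem abs_rpow_three_halves_regularity :
    ContDiff ℝ 1 (fun t : ℝ => |t| ^ (3 / 2 : ℝ)) ∧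
    (∀ t : ℝ, deriv (fun s : ℝ => |s| ^ (3 / 2 : ℝ)) t
      = 3 / 2 * Real.sign t * |t| ^ (1 / 2 : ℝ)) ∧
    deriv (fun s : ℝ => |s| ^ (3 / 2 : ℝ)) 0 = 0 ∧
    ¬ DifferentiableAt ℝ (deriv (fun s : ℝ => |s| ^ (3 / 2 : ℝ))) 0 ∧
    (∀ t : ℝ, t ≠ 0 →
      t ^ 2 * deriv (deriv (fun s : ℝ => |s| ^ (3 / 2 : ℝ))) t
        + 4 * t * deriv (fun s : ℝ => |s| ^ (3 / 2 : ℝ)) t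
        + |t| ^ (3 / 2 : ℝ)
      = 31 / 4 * |t| ^ (3 / 2 : ℝ)) := by
  have hp : (1 : ℝ) < 3 / 2 := by norm_num
  have hderiv (t : ℝ) :
      deriv (fun s : ℝ => |s| ^ (3 / 2 : ℝ)) t = 3 / 2 * Real.sign t * |t| ^ (1 / 2 : ℝ) := by
    rw [deriv_abs_rpow hp]
    norm_num
  refine ⟨by simpa using contDiff_norm_rpow (E := ℝ) hp, hderiv, by simp [hderiv],
    not_differentiableAt_deriv_abs_rpow_zero hp (by norm_num), fun t ht => ?_⟩
  rw [sq_mul_deriv_deriv_abs_rpow hp ht, mul_assoc 4, mul_deriv_abs_rpow hp]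
  ring
end

section
/- For every c ∈ ℝ, the function x_c(t) = c·|t|^{3/2} satisfies, for every t ≠ 0, t⁴·x_c''(t) + 4t³·x_c'(t) + t²·sin(x_c(t)) = (27/4)·c·t²·|t|^{3/2} + t²·sin(c·|t|^{3/2}), and x_c(0) = x_c'(0) = 0. Hence for the nonlinear variable-length pendulum with ℓ(t) = t² and input u_c(t) := (27/4)·c·t²·|t|^{3/2} + t²·sin(c·|t|^{3/2}), the zero initial data at t = 0 admit a one-parameter family of distinct solutions (x_c ≠ x_{c'} on every [0,ε], ε > 0, for c ≠ c'). -/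
noncomputable section

open Filter Real

private lemma deriv_f_pos (c t : ℝ) (ht : 0 < t) :
    deriv (fun s : ℝ => c * |s| ^ (3 / 2 : ℝ)) t = c * (3 / 2) * t ^ (1 / 2 : ℝ) := by
  have hE : (fun s : ℝ => c * |s| ^ (3 / 2 : ℝ)) =ᶠ[nhds t]
      (fun s : ℝ => c * s ^ (3 / 2 : ℝ)) := by
    filter_upwards [eventually_gt_nhds ht] with s hs
    rw [abs_of_pos hs]
  rw [hE.deriv_eq]
  have h : HasDerivAt (fun s : ℝ => c * s ^ (3 / 2 : ℝ))
      (c * ((3 / 2 : ℝ) * t ^ ((3 / 2 : ℝ) - 1))) t :=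
    (Real.hasDerivAt_rpow_const (Or.inl ht.ne')).const_mul c
  rw [h.deriv]
  norm_num
  ring

private lemma deriv_f_neg (c t : ℝ) (ht : t < 0) :
    deriv (fun s : ℝ => c * |s| ^ (3 / 2 : ℝ)) t = -(c * (3 / 2) * (-t) ^ (1 / 2 : ℝ)) := by
  have hE : (fun s : ℝ => c * |s| ^ (3 / 2 : ℝ)) =ᶠ[nhds t]
      (fun s : ℝ => c * (-s) ^ (3 / 2 : ℝ)) := by
    filter_upwards [eventually_lt_nhds ht] with s hs
    rw [abs_of_neg hs]
  rw [hE.deriv_eq]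
  have h1 : HasDerivAt (fun s : ℝ => -s) (-1) t := (hasDerivAt_id t).neg
  have h2 : HasDerivAt (fun s : ℝ => c * (-s) ^ (3 / 2 : ℝ))
      (c * ((3 / 2 : ℝ) * (-t) ^ ((3 / 2 : ℝ) - 1) * (-1))) t :=
    (((Real.hasDerivAt_rpow_const (p := (3/2:ℝ))
      (Or.inl (neg_ne_zero.mpr ht.ne))).comp t h1)).const_mul c
  rw [h2.deriv]
  norm_num
  ring

private lemma deriv2_f_pos (c t : ℝ) (ht : 0 < t) :
    deriv (deriv (fun s : ℝ => c * |s| ^ (3 / 2 : ℝ))) t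
      = c * (3 / 4) * t ^ (-(1 / 2) : ℝ) := by
  have hD : deriv (fun s : ℝ => c * |s| ^ (3 / 2 : ℝ)) =ᶠ[nhds t]
      (fun s : ℝ => c * (3 / 2) * s ^ (1 / 2 : ℝ)) := by
    filter_upwards [eventually_gt_nhds ht] with s hs
    exact deriv_f_pos c s hs
  rw [hD.deriv_eq]
  have h : HasDerivAt (fun s : ℝ => c * (3 / 2) * s ^ (1 / 2 : ℝ))
      (c * (3 / 2) * ((1 / 2 : ℝ) * t ^ ((1 / 2 : ℝ) - 1))) t :=
    (Real.hasDerivAt_rpow_const (Or.inl ht.ne')).const_mul (c * (3 / 2))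
  rw [h.deriv]
  norm_num
  ring

private lemma deriv2_f_neg (c t : ℝ) (ht : t < 0) :
    deriv (deriv (fun s : ℝ => c * |s| ^ (3 / 2 : ℝ))) t
      = c * (3 / 4) * (-t) ^ (-(1 / 2) : ℝ) := by
  have hD : deriv (fun s : ℝ => c * |s| ^ (3 / 2 : ℝ)) =ᶠ[nhds t]
      (fun s : ℝ => -(c * (3 / 2) * (-s) ^ (1 / 2 : ℝ))) := by
    filter_upwards [eventually_lt_nhds ht] with s hs
    exact deriv_f_neg c s hs
  rw [hD.deriv_eq]
  have h1 : HasDerivAt (fun s : ℝ => -s) (-1) t := (hasDerivAt_id t).neg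
  have h : HasDerivAt (fun s : ℝ => -(c * (3 / 2) * (-s) ^ (1 / 2 : ℝ)))
      (-(c * (3 / 2) * ((1 / 2 : ℝ) * (-t) ^ ((1 / 2 : ℝ) - 1) * (-1)))) t :=
    ((((Real.hasDerivAt_rpow_const (p := (1/2:ℝ))
      (Or.inl (neg_ne_zero.mpr ht.ne))).comp t h1)).const_mul (c * (3 / 2))).neg
  rw [h.deriv]
  norm_num
  ring

private lemma deriv_f_zero (c : ℝ) :
    HasDerivAt (fun s : ℝ => c * |s| ^ (3 / 2 : ℝ)) 0 0 := by
  rw [hasDerivAt_iff_tendsto_slope]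
  have hb : ∀ᶠ x in nhdsWithin (0:ℝ) {(0:ℝ)}ᶜ,
      ‖slope (fun s : ℝ => c * |s| ^ (3 / 2 : ℝ)) 0 x‖ ≤ |c| * |x| ^ (1 / 2 : ℝ) := by
    filter_upwards [self_mem_nhdsWithin] with x (hx : x ≠ 0)
    have hax : (0:ℝ) < |x| := abs_pos.mpr hx
    have : slope (fun s : ℝ => c * |s| ^ (3 / 2 : ℝ)) 0 x
        = c * |x| ^ (3 / 2 : ℝ) / x := by
      simp [slope_def_field, Real.zero_rpow, div_eq_mul_inv]
    rw [this, Real.norm_eq_abs]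
    rw [abs_div, abs_mul, abs_of_nonneg (Real.rpow_nonneg (abs_nonneg x) _)]
    rw [mul_div_assoc]
    have : |x| ^ (3 / 2 : ℝ) / |x| = |x| ^ (1 / 2 : ℝ) := by
      rw [show |x| ^ (1/2:ℝ) = |x| ^ ((3/2:ℝ) - 1) by norm_num,
        Real.rpow_sub hax, Real.rpow_one]
    rw [this]
  have hc : ContinuousAt (fun x : ℝ => |c| * |x| ^ (1 / 2 : ℝ)) 0 := by
    exact ((Real.continuousAt_rpow_const _ _ (Or.inr (by norm_num))).comp
      continuous_abs.continuousAt).const_mul _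
  have hg := hc.continuousWithinAt (s := {(0:ℝ)}ᶜ)
  have h0 : |c| * |(0:ℝ)| ^ (1 / 2 : ℝ) = 0 := by
    simp [Real.zero_rpow]
  rw [ContinuousWithinAt, h0] at hg
  exact squeeze_zero_norm' hb hg

/-- For every `c ∈ ℝ`, the function `x_c t = c·|t|^{3/2}` satisfies
the nonlinear variable-length pendulum equation
`t⁴·x_c'' + 4t³·x_c' + t²·sin(x_c) = (27/4)·c·t²·|t|^{3/2} + t²·sin(c·|t|^{3/2})` for
all `t ≠ 0`, with `x_c 0 = x_c' 0 = 0`; and for `c ≠ c'` the solutions `x_c`, `x_{c'}`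
differ on every interval `[0,ε]`, `ε > 0`. -/
theorem pendulum_nonlinear_nonunique_continuation :
    (∀ c : ℝ,
      (∀ t : ℝ, t ≠ 0 →
        t ^ 4 * deriv (deriv (fun s : ℝ => c * |s| ^ (3 / 2 : ℝ))) t
          + 4 * t ^ 3 * deriv (fun s : ℝ => c * |s| ^ (3 / 2 : ℝ)) t
          + t ^ 2 * Real.sin (c * |t| ^ (3 / 2 : ℝ))
        = 27 / 4 * c * t ^ 2 * |t| ^ (3 / 2 : ℝ)
            + t ^ 2 * Real.sin (c * |t| ^ (3 / 2 : ℝ))) ∧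
      c * |(0 : ℝ)| ^ (3 / 2 : ℝ) = 0 ∧
      deriv (fun s : ℝ => c * |s| ^ (3 / 2 : ℝ)) 0 = 0) ∧
    (∀ c c' : ℝ, c ≠ c' → ∀ ε : ℝ, 0 < ε →
      ∃ t ∈ Set.Icc (0 : ℝ) ε, c * |t| ^ (3 / 2 : ℝ) ≠ c' * |t| ^ (3 / 2 : ℝ)) := by
  constructor
  · intro c
    refine ⟨?_, by simp [Real.zero_rpow], (deriv_f_zero c).deriv⟩
    intro t ht
    rcases ht.lt_or_gt with h | h
    · rw [deriv_f_neg c t h, deriv2_f_neg c t h, abs_of_neg h]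
      have hu : (0:ℝ) < -t := neg_pos.mpr h
      have e1 : (-t) ^ 4 * (-t) ^ (-(1/2) : ℝ) = (-t) ^ 2 * (-t) ^ (3/2 : ℝ) := by
        rw [← Real.rpow_natCast (-t) 4, ← Real.rpow_natCast (-t) 2,
          ← Real.rpow_add hu, ← Real.rpow_add hu]
        norm_num
      have e2 : (-t) ^ 3 * (-t) ^ (1/2 : ℝ) = (-t) ^ 2 * (-t) ^ (3/2 : ℝ) := by
        rw [← Real.rpow_natCast (-t) 3, ← Real.rpow_natCast (-t) 2,
          ← Real.rpow_add hu, ← Real.rpow_add hu]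
        norm_num
      linear_combination (3/4 * c) * e1 + 6 * c * e2
    · rw [deriv_f_pos c t h, deriv2_f_pos c t h, abs_of_pos h]
      have e1 : t ^ 4 * t ^ (-(1/2) : ℝ) = t ^ 2 * t ^ (3/2 : ℝ) := by
        rw [← Real.rpow_natCast t 4, ← Real.rpow_natCast t 2,
          ← Real.rpow_add h, ← Real.rpow_add h]
        norm_num
      have e2 : t ^ 3 * t ^ (1/2 : ℝ) = t ^ 2 * t ^ (3/2 : ℝ) := by
        rw [← Real.rpow_natCast t 3, ← Real.rpow_natCast t 2,
          ← Real.rpow_add h, ← Real.rpow_add h]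
        norm_num
      linear_combination (3/4 * c) * e1 + 6 * c * e2
  · intro c c' hcc ε hε
    refine ⟨ε, ⟨hε.le, le_refl _⟩, ?_⟩
    have hp : (0:ℝ) < |ε| ^ (3/2 : ℝ) :=
      Real.rpow_pos_of_pos (abs_pos.mpr hε.ne') _
    intro h
    exact hcc (mul_right_cancel₀ hp.ne' h)
end
end
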